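/- arXiv:1604.05678 — 8 statements merged into one kernel-verified Lean document; each statement's English description precedes it below -/
import Mathlib

section
/- Let L be an infinite-dimensional Lie algebra over a field F generated by finitely many elements a_1, …, a_m such that every element of the Lie set generated by {a_1, …, a_m} is ad-nilpotent. Then L has a just infinite homomorphic image: there exists a Lie ideal J of L such that the quotient L/J is infinite-dimensional over F and every nonzero Lie ideal of L/J has finite codimension in L/J. -/
/-!
The ideals of finite codimension form an upper set in the lattice of Lie ideals of `L`, and each
of them contains a finitely generated ideal of finite codimension, i.e. one that is a compact
element of that lattice. So the union of a chain of ideals of infinite codimension still has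
infinite codimension, and Zorn's lemma gives an ideal `J` maximal among them; as the ideals of
`L ⧸ J` correspond to the ideals of `L` above `J`, the quotient `L ⧸ J` is just infinite.

The finitely generated ideal inside `I`: pick a finite `X` containing the generators with
`L = span X + I`, and write `⁅x, y⁆ = v + w(x, y)` with `v ∈ span X`, `w(x, y) ∈ I` for `x, y ∈ X`.
If `N` is the ideal generated by the `w(x, y)`, then `span X + N` is a subalgebra containing the
generators, hence `L = span X + N`.
-/

/-- The Lie set generated by a subset `X` of a Lie ring: the smallest subset of `L`
containing `X` and closed under the Lie bracket. -/
inductive LieSetClosure {L : Type*} [LieRing L] (X : Set L) : L → Prop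
  | base {x : L} : x ∈ X → LieSetClosure X x
  | bracket {x y : L} : LieSetClosure X x → LieSetClosure X y → LieSetClosure X ⁅x, y⁆

theorem exists_maximal_notMem_of_isUpperSet {α : Type*} [CompleteLattice α] {U : Set α}
    (hU : IsUpperSet U) (hcpt : ∀ u ∈ U, ∃ k ∈ U, IsCompactElement k ∧ k ≤ u)
    {a : α} (ha : a ∉ U) : ∃ m, a ≤ m ∧ Maximal (· ∉ U) m := by
  refine zorn_le_nonempty₀ Uᶜ (fun c hcU hchain x hx => ⟨sSup c, ?_, fun _ => le_sSup⟩) a ha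
  intro hsup
  obtain ⟨k, hkU, hk, hks⟩ := hcpt _ hsup
  obtain ⟨y, hyc, hky⟩ := (CompleteLattice.isCompactElement_iff_le_of_directed_sSup_le α k).mp hk
    c ⟨x, hx⟩ hchain.directedOn hks
  exact hcU hyc (hU hky hkU)

namespace Submodule

variable {R M N : Type*} [Ring R] [AddCommGroup M] [Module R M] [AddCommGroup N] [Module R N]

theorem CoFG.exists_finset_span_sup_eq_top {T : Submodule R M} (hT : T.CoFG) :
    ∃ X : Finset M, span R X ⊔ T = ⊤ := by
  classical
  obtain ⟨s, hs⟩ := Module.Finite.fg_top (R := R) (M := M ⧸ T)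
  let lift := Function.surjInv T.mkQ_surjective
  refine ⟨s.image lift, ?_⟩
  rw [sup_comm, ← map_mkQ_eq_top, map_span, Finset.coe_image, ← Set.image_comp,
    (Function.rightInverse_surjInv T.mkQ_surjective).comp_eq_id, Set.image_id, hs]

theorem CoFG.of_comap {f : M →ₗ[R] N} (hf : Function.Surjective f) {K : Submodule R N}
    (hK : (K.comap f).CoFG) : K.CoFG := by
  refine Module.Finite.of_surjective (mapQ (K.comap f) K f le_rfl) fun z => ?_
  obtain ⟨n, rfl⟩ := K.mkQ_surjective z
  obtain ⟨m, rfl⟩ := hf n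
  exact ⟨mkQ _ m, rfl⟩

end Submodule

namespace LieIdeal

open Submodule

variable {R L : Type*} [CommRing R] [LieRing L] [LieAlgebra R L]

theorem _root_.Submodule.lie_mem_of_mem_span {X : Set L} {P : Submodule R L}
    (hX : ∀ x ∈ X, ∀ y ∈ X, ⁅x, y⁆ ∈ P) {u v : L} (hu : u ∈ span R X) (hv : v ∈ span R X) :
    ⁅u, v⁆ ∈ P := by
  have hle : map₂ (LieModule.toEnd R L L : L →ₗ[R] Module.End R L) (span R X) (span R X) ≤ P := by
    rw [map₂_span_span, span_le]
    rintro _ ⟨x, hx, y, hy, rfl⟩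
    exact hX x hx y hy
  exact hle (apply_mem_map₂ _ hu hv)

theorem span_sup_eq_top_of_lie_mem {G X : Set L} (hG : LieSubalgebra.lieSpan R L G = ⊤)
    (hGX : G ⊆ X) {N : LieIdeal R L}
    (hX : ∀ x ∈ X, ∀ y ∈ X, ⁅x, y⁆ ∈ span R X ⊔ (N : Submodule R L)) :
    span R X ⊔ (N : Submodule R L) = ⊤ := by
  set P := span R X ⊔ (N : Submodule R L)
  have hP : ∀ {p q : L}, p ∈ P → q ∈ P → ⁅p, q⁆ ∈ P := by
    intro p q hp hq
    obtain ⟨u, hu, n, hn, rfl⟩ := mem_sup.mp hp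
    obtain ⟨v, hv, n', hn', rfl⟩ := mem_sup.mp hq
    rw [lie_add, add_lie, add_lie]
    exact add_mem (add_mem (lie_mem_of_mem_span hX hu hv)
      (mem_sup_right (lie_mem_left R L N _ _ hn)))
      (mem_sup_right (add_mem (N.lie_mem hn') (N.lie_mem hn')))
  let K : LieSubalgebra R L := { P with lie_mem' := hP }
  have hGK : LieSubalgebra.lieSpan R L G ≤ K :=
    LieSubalgebra.lieSpan_le.mpr fun g hg => mem_sup_left (subset_span (hGX hg))
  rw [hG] at hGK
  exact eq_top_iff.mpr fun y _ => hGK (LieSubalgebra.mem_top y)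

theorem exists_cofg_isCompactElement_le {G : Set L} (hGfin : G.Finite)
    (hG : LieSubalgebra.lieSpan R L G = ⊤) {I : LieIdeal R L} (hI : Module.Finite R (L ⧸ I)) :
    ∃ K : LieIdeal R L, Module.Finite R (L ⧸ K) ∧ IsCompactElement K ∧ K ≤ I := by
  classical
  obtain ⟨X₀, hX₀⟩ := CoFG.exists_finset_span_sup_eq_top hI
  set X := hGfin.toFinset ∪ X₀
  have hXI : span R X ⊔ (I : Submodule R L) = ⊤ :=
    top_unique (hX₀ ▸ sup_le_sup_right (span_mono (by simp [X])) _)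
  have hdec : ∀ p : L × L, ∃ w ∈ I, ⁅p.1, p.2⁆ - w ∈ span R X := fun p => by
    obtain ⟨v, hv, w, hw, hvw⟩ := mem_sup.mp (hXI ▸ mem_top : ⁅p.1, p.2⁆ ∈ span R X ⊔ _)
    exact ⟨w, hw, by rwa [← hvw, add_sub_cancel_right]⟩
  choose w hwI hw using hdec
  set S := (X ×ˢ X).image w
  set K : LieIdeal R L := S.sup fun s => LieSubmodule.lieSpan R L {s}
  have hSK : ∀ s ∈ S, s ∈ K := fun s hs =>
    Finset.le_sup (f := fun s => LieSubmodule.lieSpan R L {s}) hs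
      (LieSubmodule.subset_lieSpan rfl)
  refine ⟨K, ?_, CompleteLattice.isCompactElement_finsetSup S
    fun s _ => LieSubmodule.isCompactElement_lieSpan_singleton R L s, Finset.sup_le fun s hs => ?_⟩
  · have hK : span R X ⊔ (K : Submodule R L) = ⊤ :=
      span_sup_eq_top_of_lie_mem hG (by simp [X]) fun x hx y hy => by
        rw [← sub_add_cancel ⁅x, y⁆ (w (x, y))]
        exact add_mem (mem_sup_left (hw (x, y)))
          (mem_sup_right (hSK _ (Finset.mem_image_of_mem _ (Finset.mk_mem_product hx hy))))
    exact FG.cofg_of_codisjoint (codisjoint_iff.mpr hK) (fg_span X.finite_toSet)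
  · obtain ⟨p, -, rfl⟩ := Finset.mem_image.mp hs
    exact LieSubmodule.lieSpan_le.mpr (Set.singleton_subset_iff.mpr (hwI p))

/-- `LieSubmodule.Quotient.mk'` is only a morphism of `L`-modules, while `LieIdeal.comap` needs a
morphism of Lie algebras. -/
def quotientMk (J : LieIdeal R L) : L →ₗ⁅R⁆ L ⧸ J :=
  { (LieSubmodule.Quotient.mk' J : L →ₗ[R] L ⧸ J) with map_lie' := rfl }

theorem quotientMk_surjective (J : LieIdeal R L) : Function.Surjective (quotientMk J) :=
  LieSubmodule.Quotient.surjective_mk' J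

theorem le_comap_quotientMk (J : LieIdeal R L) (K : LieIdeal R (L ⧸ J)) :
    J ≤ comap (quotientMk J) K := fun y hy => by
  change LieSubmodule.Quotient.mk' J y ∈ K
  rw [(LieSubmodule.Quotient.mk_eq_zero J).mpr hy]
  exact K.zero_mem

theorem eq_bot_of_comap_quotientMk_le {J : LieIdeal R L} {K : LieIdeal R (L ⧸ J)}
    (h : comap (quotientMk J) K ≤ J) : K = ⊥ := eq_bot_iff.mpr fun k hk => by
  obtain ⟨y, rfl⟩ := quotientMk_surjective J k
  exact (LieSubmodule.Quotient.mk_eq_zero J).mpr (h hk)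

end LieIdeal

theorem exists_just_infinite_image_general
    {F : Type*} {L : Type*} [Field F] [LieRing L] [LieAlgebra F L]
    {m : ℕ} (a : Fin m → L)
    (hgen : LieSubalgebra.lieSpan F L (Set.range a) = ⊤)
    (hinf : ¬ FiniteDimensional F L) :
    ∃ J : LieIdeal F L, ¬ FiniteDimensional F (L ⧸ J) ∧
      ∀ K : LieIdeal F (L ⧸ J), K ≠ ⊥ → FiniteDimensional F ((L ⧸ J) ⧸ K) := by
  have hU : IsUpperSet {I : LieIdeal F L | FiniteDimensional F (L ⧸ I)} :=
    fun _ _ hle hI => Submodule.CoFG.of_le hle hI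
  have hbot : ¬ FiniteDimensional F (L ⧸ (⊥ : LieIdeal F L)) :=
    (Module.Finite.iff_cofg_bot F L).not.mpr hinf
  obtain ⟨J, -, hJ, hJmax⟩ := exists_maximal_notMem_of_isUpperSet hU
    (fun _ => LieIdeal.exists_cofg_isCompactElement_le (Set.finite_range a) hgen) hbot
  refine ⟨J, hJ, fun K hK => ?_⟩
  have hI : FiniteDimensional F (L ⧸ LieIdeal.comap (LieIdeal.quotientMk J) K) := by
    by_contra hI
    exact hK (LieIdeal.eq_bot_of_comap_quotientMk_le (hJmax hI (LieIdeal.le_comap_quotientMk J K)))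
  exact Submodule.CoFG.of_comap (LieIdeal.quotientMk_surjective J) hI

/-- An infinite-dimensional finitely generated Lie algebra, all of whose Lie-set elements
are ad-nilpotent, has a just infinite homomorphic image. -/
theorem exists_just_infinite_image
    {F : Type*} {L : Type*} [Field F] [LieRing L] [LieAlgebra F L]
    {m : ℕ} (a : Fin m → L)
    (hgen : LieSubalgebra.lieSpan F L (Set.range a) = ⊤)
    (had : ∀ s : L, LieSetClosure (Set.range a) s → IsNilpotent (LieAlgebra.ad F L s))
    (hinf : ¬ FiniteDimensional F L) :
    ∃ J : LieIdeal F L, ¬ FiniteDimensional F (L ⧸ J) ∧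
      ∀ K : LieIdeal F (L ⧸ J), K ≠ ⊥ → FiniteDimensional F ((L ⧸ J) ⧸ K) :=
  exists_just_infinite_image_general a hgen hinf
end

section
/- Let L be a Lie algebra over a field F, let n ≥ 3, and suppose there are scalars α_σ ∈ F indexed by the permutations σ of {1, …, n−1}, with α_id = 1, such that Σ_σ α_σ [x_0, x_{σ(1)}, …, x_{σ(n−1)}] = 0 (left-normed brackets) for all x_0, …, x_{n−1} ∈ L. Let I be a Lie ideal of L, s ∈ L and k ≥ 2 be such that x·ad(s)^k = 0 for all x ∈ I. Then for all elements y_0, y_2, …, y_{n−1} belonging to the set I·ad(s)^{k−1} = { x·ad(s)^{k−1} : x ∈ I } one has Σ_{σ : σ(1)=1} α_σ [y_0, y_{σ(2)}, …, y_{σ(n−1)}] = 0; in particular the subalgebra [I s^{k−1}] satisfies a multilinear identity of degree n−1 whose coefficient at the identity permutation equals 1. -/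
/-!
Put `x₀ = s` in the identity and take as arguments `ad(s)^{k-2} z₀`, where `y₀ = ad(s)^{k-1} z₀`,
followed by the `yᵢ`. A term whose permutation moves the first argument begins with
`⁅s, yⱼ⁆ = ad(s)^k zⱼ = 0`; in every other term the first bracket `⁅s, ad(s)^{k-2} z₀⁆` is `y₀`,
and what remains is the identity of degree `n - 1` evaluated at `y₀, y₂, …, y_{n-1}`.
-/

def leftNormed {L : Type*} [LieRing L] (x : L) (l : List L) : L :=
  l.foldl (fun u v => ⁅u, v⁆) x

section LeftNormed

variable {L : Type*} [LieRing L]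

lemma leftNormed_cons (x a : L) (l : List L) :
    leftNormed x (a :: l) = leftNormed ⁅x, a⁆ l := rfl

lemma leftNormed_zero (l : List L) : leftNormed (0 : L) l = 0 := by
  induction l with
  | nil => rfl
  | cons a l ih => rw [leftNormed_cons, zero_lie, ih]

lemma leftNormed_ofFn_succ {m : ℕ} (a : L) (x : Fin (m + 1) → L) :
    leftNormed a (List.ofFn x) = leftNormed ⁅a, x 0⁆ (List.ofFn x).tail := by
  rw [List.ofFn_succ, leftNormed_cons, List.tail_cons]

theorem sum_fixing_zero_smul_leftNormed_tail_eq_zero {F : Type*} [CommRing F] [LieAlgebra F L]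
    {m : ℕ} (α : Equiv.Perm (Fin (m + 1)) → F)
    (hid : ∀ (x0 : L) (x : Fin (m + 1) → L),
      ∑ σ : Equiv.Perm (Fin (m + 1)), α σ • leftNormed x0 (List.ofFn fun i => x (σ i)) = 0)
    (a : L) (x : Fin (m + 1) → L) (hx : ∀ i ≠ 0, ⁅a, x i⁆ = 0) :
    ∑ σ ∈ Finset.univ.filter (fun σ : Equiv.Perm (Fin (m + 1)) => σ 0 = 0),
      α σ • leftNormed ⁅a, x 0⁆ (List.ofFn fun i => x (σ i)).tail = 0 := by
  have h := hid a x
  rw [← Finset.sum_filter_add_sum_filter_not Finset.univ (fun σ => σ 0 = 0)] at h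
  have hmoving : ∑ σ ∈ Finset.univ.filter (fun σ : Equiv.Perm (Fin (m + 1)) => ¬σ 0 = 0),
      α σ • leftNormed a (List.ofFn fun i => x (σ i)) = 0 := by
    refine Finset.sum_eq_zero fun σ hσ => ?_
    rw [leftNormed_ofFn_succ, hx _ (Finset.mem_filter.mp hσ).2, leftNormed_zero, smul_zero]
  rw [hmoving, add_zero] at h
  refine Eq.trans (Finset.sum_congr rfl fun σ hσ => ?_) h
  rw [leftNormed_ofFn_succ, (Finset.mem_filter.mp hσ).2]

end LeftNormed

lemma tail_ofFn_update_zero_comp {α : Type*} {m : ℕ} (x : Fin (m + 1) → α) (w : α)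
    (σ : Equiv.Perm (Fin (m + 1))) (hσ : σ 0 = 0) :
    (List.ofFn fun i => Function.update x 0 w (σ i)).tail = (List.ofFn fun i => x (σ i)).tail := by
  simp only [List.ofFn_succ, List.tail_cons]
  congr 1
  funext i
  exact Function.update_of_ne (hσ ▸ σ.injective.ne i.succ_ne_zero) _ _

lemma LieAlgebra.lie_ad_pow_apply {R L : Type*} [CommRing R] [LieRing L] [LieAlgebra R L]
    (s z : L) (j : ℕ) : ⁅s, (ad R L s ^ j) z⁆ = (ad R L s ^ (j + 1)) z := by
  rw [pow_succ', Module.End.mul_apply, ad_apply]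

theorem sum_fixing_zero_smul_leftNormed_tail_eq_zero_of_ad_pow_eq_zero
    {F L : Type*} [CommRing F] [LieRing L] [LieAlgebra F L]
    {m : ℕ} (α : Equiv.Perm (Fin (m + 1)) → F)
    (hid : ∀ (x0 : L) (x : Fin (m + 1) → L),
      ∑ σ : Equiv.Perm (Fin (m + 1)), α σ • leftNormed x0 (List.ofFn fun i => x (σ i)) = 0)
    (S : Set L) (s : L) {k : ℕ} (hk : 2 ≤ k) (hSk : ∀ z ∈ S, (LieAlgebra.ad F L s ^ k) z = 0)
    (z0 : L) (x : Fin (m + 1) → L)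
    (hx : ∀ i ≠ 0, ∃ z ∈ S, x i = (LieAlgebra.ad F L s ^ (k - 1)) z) :
    ∑ σ ∈ Finset.univ.filter (fun σ : Equiv.Perm (Fin (m + 1)) => σ 0 = 0),
      α σ • leftNormed ((LieAlgebra.ad F L s ^ (k - 1)) z0) (List.ofFn fun i => x (σ i)).tail
      = 0 := by
  have hcommute : ∀ i ≠ 0,
      ⁅s, Function.update x 0 ((LieAlgebra.ad F L s ^ (k - 2)) z0) i⁆ = 0 := by
    intro i hi
    obtain ⟨z, hz, hxi⟩ := hx i hi
    rw [Function.update_of_ne hi, hxi, LieAlgebra.lie_ad_pow_apply, Nat.sub_add_cancel (by omega)]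
    exact hSk z hz
  have h := sum_fixing_zero_smul_leftNormed_tail_eq_zero α hid s _ hcommute
  rw [Function.update_self, LieAlgebra.lie_ad_pow_apply, show k - 2 + 1 = k - 1 by omega] at h
  refine Eq.trans (Finset.sum_congr rfl fun σ hσ => ?_) h
  rw [tail_ofFn_update_zero_comp x _ σ (Finset.mem_filter.mp hσ).2]

/-- If `L` satisfies a multilinear identity of degree `n` (with coefficient 1 at the identity
permutation), `I` is an ideal, `s ∈ L`, `k ≥ 2` and `I·ad(s)^k = 0`, then the elements of
`I·ad(s)^{k-1}` satisfy the identity of degree `n-1` obtained by keeping the terms with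
`σ(1) = 1`. -/
theorem identity_of_smaller_degree_on_ad_image
    {F : Type*} {L : Type*} [Field F] [LieRing L] [LieAlgebra F L]
    (n : ℕ) (hn : 3 ≤ n) (α : Equiv.Perm (Fin (n - 1)) → F)
    (hid : ∀ (x0 : L) (x : Fin (n - 1) → L),
      ∑ σ : Equiv.Perm (Fin (n - 1)),
        α σ • leftNormed x0 (List.ofFn fun i => x (σ i)) = 0)
    (I : LieIdeal F L) (s : L) (k : ℕ) (hk : 2 ≤ k)
    (hIk : ∀ x ∈ I, ((LieAlgebra.ad F L s) ^ k) x = 0)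
    (y0 : L) (hy0 : ∃ x ∈ I, y0 = ((LieAlgebra.ad F L s) ^ (k - 1)) x)
    (x : Fin (n - 1) → L)
    (hx : ∀ i : Fin (n - 1), i ≠ ⟨0, by omega⟩ →
      ∃ z ∈ I, x i = ((LieAlgebra.ad F L s) ^ (k - 1)) z) :
    ∑ σ ∈ Finset.univ.filter
        (fun σ : Equiv.Perm (Fin (n - 1)) => σ ⟨0, by omega⟩ = ⟨0, by omega⟩),
      α σ • leftNormed y0 (List.ofFn fun i => x (σ i)).tail = 0 := by
  obtain ⟨m, rfl⟩ : ∃ m, n = m + 2 := ⟨n - 2, by omega⟩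
  obtain ⟨z0, -, rfl⟩ := hy0
  exact sum_fixing_zero_smul_leftNormed_tail_eq_zero_of_ad_pow_eq_zero α hid I s hk hIk z0 x hx
end

section
/- Let L be a Lie algebra over a field F, let I be a Lie ideal of L, let s ∈ L and k ≥ 2 be such that x·ad(s)^k = 0 for all x ∈ I. Let t ≥ 2, set N = k·t − 1, and let a_1, …, a_N ∈ I. Then the composition of operators ad(a_1·ad(s)^{k−1}) · ad(a_2·ad(s)^{k−1}) · … · ad(a_N·ad(s)^{k−1}) (operators on L applied from left to right) lies in the F-linear span of the operators of the form P' · ad(s)^{k−1} · ∏_{j=0}^{t−2} ( ad(a_{i+j}) · ad(s)^{k−1} ) · P'', where 1 ≤ i ≤ N − t + 2 and P', P'' are (possibly empty) finite products of operators from the set {ad(a_1), …, ad(a_N), ad(s)}. -/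
open LieAlgebra

/-- The composition (applied from left to right) of the operators
`ad(b 1), ad(b 2), …, ad(b N)` on a Lie algebra. -/
def adProd (F : Type*) {L : Type*} [Field F] [LieRing L] [LieAlgebra F L]
    (b : ℕ → L) : ℕ → Module.End F L
  | 0 => 1
  | j + 1 => LieAlgebra.ad F L (b (j + 1)) * adProd F b j

/-- The operator `∏_{j=0}^{c-1} (ad(a (i+j)) · Sk)`, applied from left to right. -/
def midProd (F : Type*) {L : Type*} [Field F] [LieRing L] [LieAlgebra F L]
    (a : ℕ → L) (Sk : Module.End F L) (i : ℕ) : ℕ → Module.End F L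
  | 0 => 1
  | c + 1 => (Sk * LieAlgebra.ad F L (a (i + c))) * midProd F a Sk i c

open LieAlgebra

/-!
Since `ad` is a Lie algebra homomorphism, `ad(x·ad(s)^{k-1})` is a linear combination of the
operators `ad(s)^{k-1-i} ∘ ad(x) ∘ ad(s)^i` with `0 ≤ i ≤ k-1`, so the product expands into words
indexed by exponent sequences `ι_1, …, ι_N` in `[0, k-1]`. Because `I` is an ideal,
`ad(s)^k ∘ ad(a_j) = 0`, and a word dies as soon as `ι_j < ι_{j+1}` for some `j`: the powers of
`ad(s)` between `ad(a_{j+1})` and `ad(a_j)` add up to at least `k`. Padded by `ι_0 = k-1` and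
`ι_{N+1} = 0`, the exponent sequence of a surviving word is nonincreasing of length `kt + 1` with
only `k` possible values, hence constant on `t + 1` consecutive indices `j₀, …, j₀ + t`. There all
the powers of `ad(s)` between consecutive `ad(a_j)` merge into `ad(s)^{k-1}`, which exhibits the
block `ad(s)^{k-1} ∏ (ad(a_{i+j}) ad(s)^{k-1})` with `i = j₀ + 1`.
-/

def descProd {M : Type*} [Monoid M] (f : ℕ → M) (m : ℕ) : ℕ → M
  | 0 => 1
  | n + 1 => f (m + n) * descProd f m n

section Monoid

variable {M : Type*} [Monoid M]

lemma descProd_succ (f : ℕ → M) (m n : ℕ) :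
    descProd f m (n + 1) = f (m + n) * descProd f m n := rfl

lemma descProd_add (f : ℕ → M) (m n₁ n₂ : ℕ) :
    descProd f m (n₁ + n₂) = descProd f (m + n₁) n₂ * descProd f m n₁ := by
  induction n₂ with
  | zero => simp [descProd]
  | succ n ih => rw [← add_assoc, descProd_succ, ih, descProd_succ, add_assoc, mul_assoc]

lemma descProd_succ' (f : ℕ → M) (m n : ℕ) :
    descProd f m (n + 1) = descProd f (m + 1) n * f m := by
  rw [add_comm n, descProd_add, descProd_succ, descProd, add_zero, mul_one]

lemma descProd_congr {f g : ℕ → M} {m n : ℕ} (h : ∀ j < n, f (m + j) = g (m + j)) :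
    descProd f m n = descProd g m n := by
  induction n with
  | zero => rfl
  | succ n ih =>
    rw [descProd_succ, descProd_succ, h n n.lt_succ_self, ih fun j hj => h j (by omega)]

lemma descProd_mem {S : Submonoid M} {f : ℕ → M} {m n : ℕ} (h : ∀ j < n, f (m + j) ∈ S) :
    descProd f m n ∈ S := by
  induction n with
  | zero => exact S.one_mem
  | succ n ih => exact S.mul_mem (h n n.lt_succ_self) (ih fun j hj => h j (by omega))

lemma SemiconjBy.descProd {a : M} {f g : ℕ → M} {m n : ℕ}
    (h : ∀ j < n, SemiconjBy a (f (m + j)) (g (m + j))) :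
    SemiconjBy a (descProd f m n) (descProd g m n) := by
  induction n with
  | zero => exact SemiconjBy.one_right a
  | succ n ih => exact (h n n.lt_succ_self).mul_right (ih fun j hj => h j (by omega))

end Monoid

lemma descProd_eq_zero {M₀ : Type*} [MonoidWithZero M₀] {f : ℕ → M₀} {m n j : ℕ}
    (hmj : m ≤ j) (hjn : j + 2 ≤ m + n) (h : f (j + 1) * f j = 0) : descProd f m n = 0 := by
  obtain ⟨d, rfl⟩ := Nat.exists_eq_add_of_le hmj
  obtain ⟨r, rfl⟩ := Nat.exists_eq_add_of_le (show d + 2 ≤ n by omega)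
  rw [descProd_add, descProd_succ, descProd_succ, ← mul_assoc (f _), ← add_assoc m d 1, h,
    zero_mul, mul_zero]

lemma descProd_mem_span {F R α : Type*} [CommSemiring F] [Semiring R] [Algebra F R]
    {f : ℕ → α → R} {s : Set α} (hs : s.Nonempty) {X : ℕ → R}
    (hX : ∀ j, X j ∈ Submodule.span F (f j '' s)) (m n : ℕ) :
    descProd X m n ∈ Submodule.span F
      {E | ∃ ι : ℕ → α, (∀ j, ι j ∈ s) ∧ E = descProd (fun j => f j (ι j)) m n} := by
  induction n with
  | zero =>
    obtain ⟨x, hx⟩ := hs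
    exact Submodule.subset_span ⟨fun _ => x, fun _ => hx, rfl⟩
  | succ n ih =>
    have hmul := Submodule.mul_mem_mul (hX (m + n)) ih
    rw [Submodule.span_mul_span] at hmul
    refine Submodule.span_mono ?_ hmul
    rintro _ ⟨_, ⟨i, hi, rfl⟩, _, ⟨ι, hι, rfl⟩, rfl⟩
    refine ⟨Function.update ι (m + n) i, fun j => ?_, ?_⟩
    · by_cases hj : j = m + n
      · subst hj; simpa using hi
      · simpa [hj] using hι j
    · rw [descProd_succ, Function.update_self]
      exact congrArg _ (descProd_congr fun j hj => by rw [Function.update_of_ne (by omega)])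

lemma Antitone.exists_plateau {e : ℕ → ℕ} (he : Antitone e) {k : ℕ} (hk : e 0 < k) (t : ℕ) :
    ∃ j, j + t ≤ k * t ∧ ∀ c ≤ t, e (j + c) = e j := by
  by_contra! hcon
  have hdrop : ∀ j, j + t ≤ k * t → e (j + t) < e j := fun j hj => by
    obtain ⟨c, hc, hne⟩ := hcon j hj
    exact (he (by omega : j + c ≤ j + t)).trans_lt ((he (by omega)).lt_of_ne hne)
  have hdescent : ∀ c ≤ k, e (c * t) + c ≤ e 0 := by
    intro c hc
    induction c with
    | zero => simp
    | succ c ih =>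
      have := hdrop (c * t) (by nlinarith)
      rw [Nat.succ_mul]
      omega
  have := hdescent k le_rfl
  omega

section Word

variable {M : Type*} [Monoid M] {A : M} {T : ℕ → M} {K : ℕ} {e : ℕ → ℕ}

variable (A T K) in
def wordFactor (e : ℕ → ℕ) (j : ℕ) : M := A ^ (K - e j) * T j * A ^ e j

lemma wordFactor_mem {S : Submonoid M} (hA : A ∈ S) {j : ℕ} (hT : T j ∈ S) :
    wordFactor A T K e j ∈ S :=
  S.mul_mem (S.mul_mem (S.pow_mem hA _) hT) (S.pow_mem hA _)

lemma exists_descProd_wordFactor_mul_pow_eq {S : Submonoid M} (hA : A ∈ S) {m : ℕ}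
    (hT : ∀ j < m, T (1 + j) ∈ S) :
    ∃ P ∈ S, descProd (wordFactor A T K e) 1 m * A ^ (K - e 0) = A ^ (K - e m) * P := by
  cases m with
  | zero => exact ⟨1, S.one_mem, by rw [descProd, one_mul, mul_one]⟩
  | succ m =>
    refine ⟨T (1 + m) * A ^ e (1 + m) * descProd (wordFactor A T K e) 1 m * A ^ (K - e 0),
      S.mul_mem (S.mul_mem (S.mul_mem (hT m m.lt_succ_self) (S.pow_mem hA _))
        (descProd_mem fun j hj => wordFactor_mem hA (hT j (by omega)))) (S.pow_mem hA _), ?_⟩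
    rw [descProd_succ, wordFactor, add_comm 1 m]
    simp only [mul_assoc]

lemma exists_pow_mul_descProd_wordFactor_eq {S : Submonoid M} (hA : A ∈ S) {m n : ℕ}
    (hT : ∀ j < n, T (m + j) ∈ S) :
    ∃ P ∈ S, A ^ e (m + n) * descProd (wordFactor A T K e) m n = P * A ^ e m := by
  cases n with
  | zero => exact ⟨1, S.one_mem, by rw [add_zero, descProd, mul_one, one_mul]⟩
  | succ n =>
    refine ⟨A ^ e (m + (n + 1)) * descProd (wordFactor A T K e) (m + 1) n * A ^ (K - e m) * T m,
      S.mul_mem (S.mul_mem (S.mul_mem (S.pow_mem hA _) (descProd_mem fun j hj => wordFactor_mem hA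
        (by simpa [add_assoc, add_comm 1] using hT (j + 1) (by omega)))) (S.pow_mem hA _))
        (by simpa using hT 0 (by omega)), ?_⟩
    rw [descProd_succ', wordFactor]
    simp only [mul_assoc]

lemma pow_mul_descProd_wordFactor_eq {r m n : ℕ} (hr : r ≤ K) (he : ∀ j < n, e (m + j) = r) :
    A ^ r * descProd (wordFactor A T K e) m n = descProd (fun j => A ^ K * T j) m n * A ^ r :=
  SemiconjBy.descProd fun j hj => by
    simp only [SemiconjBy, wordFactor, he j hj, ← mul_assoc, ← pow_add, Nat.add_sub_cancel' hr]

lemma exists_descProd_wordFactor_eq_of_plateau {S : Submonoid M} (hA : A ∈ S) {N j₀ b : ℕ}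
    (hT : ∀ j, 1 ≤ j → j ≤ N → T j ∈ S) (he₀ : e 0 = K) (heN : e (N + 1) = 0)
    (hN : j₀ + b ≤ N) (hle : e j₀ ≤ K) (hrun : ∀ c ≤ b + 1, e (j₀ + c) = e j₀) :
    ∃ P' ∈ S, ∃ P'' ∈ S, descProd (wordFactor A T K e) 1 N =
      P'' * descProd (fun j => A ^ K * T j) (j₀ + 1) b * A ^ K * P' := by
  obtain ⟨n, rfl⟩ := Nat.exists_eq_add_of_le hN
  obtain ⟨P', hP', hright⟩ := exists_descProd_wordFactor_mul_pow_eq (K := K) (e := e) hA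
    (m := j₀) fun j hj => hT _ (by omega) (by omega)
  obtain ⟨P'', hP'', hleft⟩ := exists_pow_mul_descProd_wordFactor_eq (K := K) (e := e) hA
    (m := j₀ + b + 1) (n := n) fun j hj => hT _ (by omega) (by omega)
  have hblock := pow_mul_descProd_wordFactor_eq (A := A) (T := T) hle
    (m := j₀ + 1) (n := b) fun c hc => by rw [add_assoc]; exact hrun (1 + c) (by omega)
  refine ⟨P', hP', P'', hP'', ?_⟩
  calc descProd (wordFactor A T K e) 1 (j₀ + b + n)
      = A ^ e (j₀ + b + 1 + n) * descProd (wordFactor A T K e) (j₀ + b + 1) n *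
          descProd (wordFactor A T K e) (j₀ + 1) b *
          (descProd (wordFactor A T K e) 1 j₀ * A ^ (K - e 0)) := by
        rw [show j₀ + b + 1 + n = j₀ + b + n + 1 by omega, heN, he₀, Nat.sub_self, pow_zero,
          one_mul, mul_one, descProd_add, descProd_add, add_comm 1 (j₀ + b),
          add_comm 1 j₀, mul_assoc]
    _ = P'' * (A ^ e j₀ * descProd (wordFactor A T K e) (j₀ + 1) b) * (A ^ (K - e j₀) * P') := by
        have hr : e (j₀ + b + 1) = e j₀ := hrun (b + 1) le_rfl
        rw [hleft, hright, hr]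
        simp only [mul_assoc]
    _ = P'' * descProd (fun j => A ^ K * T j) (j₀ + 1) b * A ^ K * P' := by
        rw [hblock]
        simp only [mul_assoc]
        rw [← mul_assoc (A ^ e j₀), ← pow_add, Nat.add_sub_cancel' hle]

end Word

lemma wordFactor_succ_mul_wordFactor_eq_zero {M₀ : Type*} [MonoidWithZero M₀] {A : M₀}
    {T : ℕ → M₀} {K : ℕ} {e : ℕ → ℕ} {j : ℕ} (hAT : A ^ (K + 1) * T j = 0) (hej : e j ≤ K)
    (hlt : e j < e (j + 1)) :
    wordFactor A T K e (j + 1) * wordFactor A T K e j = 0 := by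
  have hkill : A ^ e (j + 1) * A ^ (K - e j) * T j = 0 := by
    rw [← pow_add, show e (j + 1) + (K - e j) = (e (j + 1) - e j - 1) + (K + 1) by omega,
      pow_add, mul_assoc, hAT, mul_zero]
  calc wordFactor A T K e (j + 1) * wordFactor A T K e j
      = A ^ (K - e (j + 1)) * T (j + 1) * (A ^ e (j + 1) * A ^ (K - e j) * T j) * A ^ e j := by
        simp only [wordFactor, mul_assoc]
    _ = 0 := by rw [hkill, mul_zero, zero_mul]

lemma descProd_wordFactor_eq_zero_or {M₀ : Type*} [MonoidWithZero M₀] {A : M₀} {T : ℕ → M₀}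
    {S : Submonoid M₀} (hA : A ∈ S) {k t N : ℕ} (hk : 1 ≤ k) (ht : 1 ≤ t) (hN : N + 1 = k * t)
    (hT : ∀ j, 1 ≤ j → j ≤ N → T j ∈ S) (hAT : ∀ j, 1 ≤ j → j ≤ N → A ^ k * T j = 0)
    {ι : ℕ → ℕ} (hι : ∀ j, ι j ≤ k - 1) :
    descProd (wordFactor A T (k - 1) ι) 1 N = 0 ∨
      ∃ i, 1 ≤ i ∧ i ≤ N - t + 2 ∧ ∃ P' ∈ S, ∃ P'' ∈ S,
        descProd (wordFactor A T (k - 1) ι) 1 N =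
          P'' * descProd (fun j => A ^ (k - 1) * T j) i (t - 1) * A ^ (k - 1) * P' := by
  -- the padding leaves the word unchanged and makes a surviving exponent sequence antitone on ℕ
  set e : ℕ → ℕ := fun j => if j = 0 then k - 1 else if j ≤ N then ι j else 0 with he
  have he_le : ∀ j, e j ≤ k - 1 := fun j => by
    simp only [he]; split_ifs <;> first | exact le_rfl | exact hι j | exact Nat.zero_le _
  have hword : descProd (wordFactor A T (k - 1) ι) 1 N = descProd (wordFactor A T (k - 1) e) 1 N :=
    descProd_congr fun j hj => by simp only [wordFactor, he, if_neg (by omega : 1 + j ≠ 0),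
      if_pos (by omega : 1 + j ≤ N)]
  rw [hword]
  by_cases hanti : ∀ j, e (j + 1) ≤ e j
  · right
    obtain ⟨j₀, hj₀, hrun⟩ := (antitone_nat_of_succ_le hanti).exists_plateau (k := k)
      (by simp only [he, if_pos rfl]; omega) t
    exact ⟨j₀ + 1, by omega, by omega, exists_descProd_wordFactor_eq_of_plateau hA hT
      (by simp [he]) (by simp [he]) (by omega) (he_le j₀)
      fun c hc => hrun c (by omega)⟩
  · left
    push Not at hanti
    obtain ⟨j, hj⟩ := hanti
    have hj₀ : j ≠ 0 := by
      rintro rfl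
      exact hj.not_ge (he_le 1)
    have hjN : j + 1 ≤ N := by
      by_contra hjN
      have : e (j + 1) = 0 := by simp only [he]; rw [if_neg (by omega), if_neg hjN]
      omega
    refine descProd_eq_zero (j := j) (by omega) (by omega)
      (wordFactor_succ_mul_wordFactor_eq_zero ?_ (he_le j) hj)
    rw [Nat.sub_add_cancel hk]
    exact hAT j (by omega) (by omega)

section LieAlgebra

variable {F L : Type*} [Field F] [LieRing L] [LieAlgebra F L]

lemma ad_pow_apply_mem_span (s x : L) (m : ℕ) :
    ad F L ((ad F L s ^ m) x) ∈ Submodule.span F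
      ((fun i => ad F L s ^ (m - i) * ad F L x * ad F L s ^ i) '' Set.Iic m) := by
  induction m with
  | zero => exact Submodule.subset_span ⟨0, Set.mem_Iic.mpr le_rfl, by simp⟩
  | succ m ih =>
    have hA := Submodule.mem_span_singleton_self (R := F) (ad F L s)
    have hleft := Submodule.mul_mem_mul hA ih
    have hright := Submodule.mul_mem_mul ih hA
    rw [Submodule.span_mul_span] at hleft hright
    have hbracket : ∀ y, ad F L ⁅s, y⁆ = ad F L s * ad F L y - ad F L y * ad F L s := fun y => by
      ext z
      simp
    rw [pow_succ', Module.End.mul_apply, ad_apply, hbracket]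
    refine sub_mem (Submodule.span_mono ?_ hleft) (Submodule.span_mono ?_ hright)
    · rintro _ ⟨_, rfl, _, ⟨i, hi, rfl⟩, rfl⟩
      refine ⟨i, Nat.le_succ_of_le hi, ?_⟩
      simp only [Set.mem_Iic] at hi
      simp only [← mul_assoc, ← pow_succ', Nat.sub_add_comm hi]
    · rintro _ ⟨_, ⟨i, hi, rfl⟩, _, rfl, rfl⟩
      refine ⟨i + 1, Nat.succ_le_succ hi, ?_⟩
      simp only [mul_assoc, ← pow_succ, Nat.add_sub_add_right]

lemma pow_ad_mul_ad_eq_zero {I : LieIdeal F L} {s a : L} {k : ℕ}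
    (hIk : ∀ x ∈ I, (ad F L s ^ k) x = 0) (ha : a ∈ I) : ad F L s ^ k * ad F L a = 0 :=
  LinearMap.ext fun x => hIk _ (lie_mem_left F L I a x ha)

variable (F) in
lemma adProd_eq_descProd (b : ℕ → L) (N : ℕ) :
    adProd F b N = descProd (fun j => ad F L (b j)) 1 N := by
  induction N with
  | zero => rfl
  | succ N ih => rw [adProd, ih, descProd_succ, add_comm 1 N]

variable (F) in
lemma midProd_eq_descProd (a : ℕ → L) (E : Module.End F L) (i c : ℕ) :
    midProd F a E i c = descProd (fun j => E * ad F L (a j)) i c := by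
  induction c with
  | zero => rfl
  | succ c ih => rw [midProd, ih, descProd_succ]

end LieAlgebra

/-- Lemma 7: if `I·ad(s)^k = 0`, `k ≥ 2`, `t ≥ 2`, `N = kt - 1` and `a_1, …, a_N ∈ I`,
then `ad(a_1·ad(s)^{k-1}) ⋯ ad(a_N·ad(s)^{k-1})` is a linear combination of operators
`P'·ad(s)^{k-1}·∏_{j=0}^{t-2}(ad(a_{i+j})·ad(s)^{k-1})·P''` with `P', P''` products of
the `ad(a_j)`'s and `ad(s)`. -/
theorem ad_image_product_mem_span
    (F : Type*) {L : Type*} [Field F] [LieRing L] [LieAlgebra F L]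
    (I : LieIdeal F L) (s : L) (k : ℕ) (hk : 2 ≤ k)
    (hIk : ∀ x ∈ I, ((LieAlgebra.ad F L s) ^ k) x = 0)
    (t : ℕ) (ht : 2 ≤ t) (N : ℕ) (hN : N = k * t - 1)
    (a : ℕ → L) (ha : ∀ j, 1 ≤ j → j ≤ N → a j ∈ I) :
    adProd F (fun j => ((LieAlgebra.ad F L s) ^ (k - 1)) (a j)) N ∈
      Submodule.span F
        { E : Module.End F L | ∃ i : ℕ, 1 ≤ i ∧ i ≤ N - t + 2 ∧
          ∃ P' ∈ Submonoid.closure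
              ({LieAlgebra.ad F L s} ∪ (fun j => LieAlgebra.ad F L (a j)) '' {j | 1 ≤ j ∧ j ≤ N}),
          ∃ P'' ∈ Submonoid.closure
              ({LieAlgebra.ad F L s} ∪ (fun j => LieAlgebra.ad F L (a j)) '' {j | 1 ≤ j ∧ j ≤ N}),
          E = P'' * midProd F a ((LieAlgebra.ad F L s) ^ (k - 1)) i (t - 1) *
              ((LieAlgebra.ad F L s) ^ (k - 1)) * P' } := by
  have hN' : N + 1 = k * t := by
    have := Nat.mul_le_mul hk ht
    omega
  set S := Submonoid.closure
    ({ad F L s} ∪ (fun j => ad F L (a j)) '' {j | 1 ≤ j ∧ j ≤ N})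
  have hA : ad F L s ∈ S := Submonoid.subset_closure (Set.mem_union_left _ rfl)
  have hT : ∀ j, 1 ≤ j → j ≤ N → ad F L (a j) ∈ S := fun j h₁ h₂ =>
    Submonoid.subset_closure (Set.mem_union_right _ ⟨j, ⟨h₁, h₂⟩, rfl⟩)
  rw [adProd_eq_descProd]
  refine Submodule.span_le.mpr ?_ (descProd_mem_span ⟨0, Set.mem_Iic.mpr (Nat.zero_le _)⟩
    (fun j => ad_pow_apply_mem_span s (a j) (k - 1)) 1 N)
  rintro _ ⟨ι, hι, rfl⟩
  rcases descProd_wordFactor_eq_zero_or hA (by omega) (by omega) hN' hT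
      (fun j h₁ h₂ => pow_ad_mul_ad_eq_zero hIk (ha j h₁ h₂)) hι
    with hzero | ⟨i, hi₁, hi₂, P', hP', P'', hP'', hword⟩
  · exact hzero ▸ zero_mem _
  · exact Submodule.subset_span ⟨i, hi₁, hi₂, P', hP', P'', hP'', by
      rw [← midProd_eq_descProd] at hword
      exact hword⟩
end

section
/- Let A be a (not necessarily associative) algebra over a field F and let d_1, …, d_n be derivations of A such that d_i ∘ d_j = d_j ∘ d_i for all i, j, d_i ∘ d_i = 0 for all i, and (x·d_i)(y·d_i) = 0 for all x, y ∈ A and all i. Let U_k = U_k(d_1, …, d_n). Then: (1) (ab)U_m = Σ_{i=0}^{m} (aU_i)(bU_{m−i}) for all a, b ∈ A and all m ≥ 0; (2) the map a ↦ Σ_{i=0}^{n} aU_i is an algebra automorphism of A; (3) for all a, x ∈ A and m ≥ 0, x·R(aU_m) = Σ_{i=0}^{m} (−1)^i ((xU_i)·a)U_{m−i}, where R(a) denotes the operator of right multiplication by a; (4) U_i ∘ U_j = C(i+j, i)·U_{i+j} for all i, j ≥ 0, where C(i+j,i) is the binomial coefficient. -/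
/-!
Because the `d_i` commute, `U_k` is the sum of the products `d_S = ∏_{i ∈ S} d_i` over the
`k`-subsets `S`. Iterating the Leibniz rule gives `d_S (ab) = ∑_{P ⊆ S} (d_P a)(d_{S∖P} b)`
and `x (d_S a) = ∑_{P ⊆ S} (-1)^|P| d_{S∖P} ((d_P x) a)`. The hypotheses `d_i² = 0` and
`(x d_i)(y d_i) = 0` make every term indexed by two overlapping subsets vanish, so both sums
can be regrouped over pairs of disjoint subsets of prescribed sizes, which gives (1) and (3).
In the same way `d_P d_Q` is `d_{P ∪ Q}` for disjoint `P`, `Q` and `0` otherwise, and an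
`(i+j)`-set splits in `C(i+j, i)` ways, which gives (4). Finally `∑_k U_k = ∏_i (1 + d_i)`, and
each `1 + d_i` is multiplicative (since `(x d_i)(y d_i) = 0`) and invertible (with inverse
`1 - d_i`), which gives (2).
-/

/-- The divided-power operator `U_k(d_1, …, d_n)`: the sum over all `k`-element subsets
`{i_1 < … < i_k}` of `{1, …, n}` of the compositions `d_{i_1} ∘ ⋯ ∘ d_{i_k}`.
`U_0` is the identity and `U_k = 0` for `k > n`. -/
noncomputable def Uop {F : Type*} {A : Type*} [Field F] [AddCommGroup A] [Module F A]
    {n : ℕ} (d : Fin n → Module.End F A) (k : ℕ) : Module.End F A :=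
  ∑ S ∈ Finset.powersetCard k (Finset.univ : Finset (Fin n)),
    ((S.sort (· ≤ ·)).map d).prod

open Finset

namespace Finset
variable {α M : Type*} [DecidableEq α] [AddCommMonoid M]

theorem sum_powersetCard_sum_powersetCard_of_disjoint (s : Finset α) (i j : ℕ)
    (f : Finset α → Finset α → M) (hf : ∀ P Q, ¬Disjoint P Q → f P Q = 0) :
    ∑ P ∈ powersetCard i s, ∑ Q ∈ powersetCard j s, f P Q =
      ∑ S ∈ powersetCard (i + j) s, ∑ P ∈ powersetCard i S, f P (S \ P) := by
  rw [← sum_product', sum_sigma']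
  symm
  refine sum_bij_ne_zero (fun x _ _ => (x.2, x.1 \ x.2)) ?_ ?_ ?_ (fun _ _ _ => rfl)
  · rintro ⟨S, P⟩ hx -
    simp only [mem_sigma, mem_product, mem_powersetCard] at hx ⊢
    obtain ⟨⟨hSs, hS⟩, hPS, hP⟩ := hx
    refine ⟨⟨hPS.trans hSs, hP⟩, sdiff_subset.trans hSs, ?_⟩
    rw [card_sdiff_of_subset hPS]
    omega
  · rintro ⟨S, P⟩ hx - ⟨S', P'⟩ hx' - h
    simp only [mem_sigma, mem_powersetCard, Prod.mk.injEq] at hx hx' h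
    obtain ⟨rfl, h⟩ := h
    rw [← union_sdiff_of_subset hx.2.1, ← union_sdiff_of_subset hx'.2.1, h]
  · rintro ⟨P, Q⟩ hPQ hne
    simp only [mem_product, mem_powersetCard] at hPQ
    have hd : Disjoint P Q := by by_contra h; exact hne (hf P Q h)
    refine ⟨⟨P ∪ Q, P⟩, ?_, fun h => hne ?_, ?_⟩
    · simp only [mem_sigma, mem_powersetCard]
      refine ⟨⟨union_subset hPQ.1.1 hPQ.2.1, ?_⟩, subset_union_left, hPQ.1.2⟩
      rw [card_union_of_disjoint hd, hPQ.1.2, hPQ.2.2]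
    · simpa [union_sdiff_cancel_left hd] using h
    · simp [union_sdiff_cancel_left hd]

theorem sum_powersetCard_sum_powerset_sdiff (s : Finset α) (m : ℕ)
    (f : Finset α → Finset α → M) (hf : ∀ P Q, ¬Disjoint P Q → f P Q = 0) :
    ∑ S ∈ powersetCard m s, ∑ P ∈ S.powerset, f P (S \ P) =
      ∑ i ∈ range (m + 1), ∑ P ∈ powersetCard i s, ∑ Q ∈ powersetCard (m - i) s, f P Q := by
  calc _ = ∑ S ∈ powersetCard m s, ∑ i ∈ range (m + 1),
          ∑ P ∈ powersetCard i S, f P (S \ P) :=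
        sum_congr rfl fun S hS => by rw [sum_powerset, (mem_powersetCard.1 hS).2]
    _ = ∑ i ∈ range (m + 1), ∑ S ∈ powersetCard m s,
          ∑ P ∈ powersetCard i S, f P (S \ P) :=
        sum_comm
    _ = _ := sum_congr rfl fun i hi => by
        rw [sum_powersetCard_sum_powersetCard_of_disjoint s i (m - i) f hf,
          Nat.add_sub_cancel' (Nat.lt_succ_iff.1 (mem_range.1 hi))]

end Finset

section CommProd

variable {ι M : Type*}

def commProd [Monoid M] (d : ι → M) (hcomm : ∀ i j, Commute (d i) (d j)) (S : Finset ι) :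
    M :=
  S.noncommProd d fun i _ j _ _ => hcomm i j

section Monoid

variable [Monoid M] (d : ι → M) (hcomm : ∀ i j, Commute (d i) (d j))

@[simp]
theorem commProd_empty : commProd d hcomm ∅ = 1 :=
  noncommProd_empty _ _

theorem commProd_insert [DecidableEq ι] {i : ι} {S : Finset ι} (h : i ∉ S) :
    commProd d hcomm (insert i S) = d i * commProd d hcomm S :=
  noncommProd_insert_of_notMem _ _ _ _ h

theorem commProd_insert' [DecidableEq ι] {i : ι} {S : Finset ι} (h : i ∉ S) :
    commProd d hcomm (insert i S) = commProd d hcomm S * d i :=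
  noncommProd_insert_of_notMem' _ _ _ _ h

theorem commProd_eq_mul_erase [DecidableEq ι] {i : ι} {S : Finset ι} (h : i ∈ S) :
    commProd d hcomm S = d i * commProd d hcomm (S.erase i) :=
  (mul_noncommProd_erase _ h _ _).symm

theorem commProd_eq_erase_mul [DecidableEq ι] {i : ι} {S : Finset ι} (h : i ∈ S) :
    commProd d hcomm S = commProd d hcomm (S.erase i) * d i :=
  (noncommProd_erase_mul _ h _ _).symm

theorem commute_commProd (i : ι) (S : Finset ι) : Commute (d i) (commProd d hcomm S) :=
  noncommProd_commute _ _ _ _ fun j _ => hcomm i j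

theorem commProd_union [DecidableEq ι] {S T : Finset ι} (h : Disjoint S T) :
    commProd d hcomm (S ∪ T) = commProd d hcomm S * commProd d hcomm T :=
  noncommProd_union_of_disjoint h _ _

theorem commProd_eq_prod_sort [LinearOrder ι] (S : Finset ι) :
    commProd d hcomm S = ((S.sort (· ≤ ·)).map d).prod := by
  rw [← noncommProd_toFinset _ d (fun i _ j _ _ => hcomm i j) (S.sort_nodup _)]
  exact noncommProd_congr (S.sort_toFinset _).symm (fun _ _ => rfl) _

theorem commProd_mem (N : Submonoid M) (hd : ∀ i, d i ∈ N) (S : Finset ι) :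
    commProd d hcomm S ∈ N :=
  N.noncommProd_mem S d _ fun i _ => hd i

end Monoid

theorem commProd_mul_commProd_eq_zero [DecidableEq ι] [MonoidWithZero M] (d : ι → M)
    (hcomm : ∀ i j, Commute (d i) (d j)) (hsq : ∀ i, d i * d i = 0) {S T : Finset ι}
    (h : ¬Disjoint S T) : commProd d hcomm S * commProd d hcomm T = 0 := by
  obtain ⟨i, hiS, hiT⟩ := not_disjoint_iff.1 h
  rw [commProd_eq_mul_erase d hcomm hiS, commProd_eq_mul_erase d hcomm hiT,
    (commute_commProd d hcomm i _).eq]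
  simp only [mul_assoc, ← mul_assoc (d i) (d i), hsq, zero_mul, mul_zero]

theorem commute_one_add [Semiring M] {d : ι → M} (hcomm : ∀ i j, Commute (d i) (d j))
    (i j : ι) : Commute (1 + d i) (1 + d j) :=
  (Commute.one_left _).add_left ((Commute.one_right _).add_right (hcomm i j))

theorem commProd_one_add [DecidableEq ι] [Semiring M] (d : ι → M)
    (hcomm : ∀ i j, Commute (d i) (d j)) (s : Finset ι) :
    commProd (fun i => 1 + d i) (commute_one_add hcomm) s =
      ∑ S ∈ s.powerset, commProd d hcomm S := by
  induction s using Finset.induction_on with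
  | empty => simp
  | insert i s hi ih =>
    rw [commProd_insert _ _ hi, ih, sum_powerset_insert hi, add_mul, one_mul, mul_sum]
    congr 1
    exact sum_congr rfl fun S hS =>
      (commProd_insert d hcomm fun h => hi (mem_powerset.1 hS h)).symm

end CommProd

section Derivation

variable {ι R A : Type*} [DecidableEq ι] [Semiring R] [NonUnitalNonAssocSemiring A]
  [Module R A]
  (d : ι → Module.End R A) (hcomm : ∀ i j, Commute (d i) (d j))

theorem commProd_insert_apply {i : ι} {S : Finset ι} (h : i ∉ S) (a : A) :
    commProd d hcomm (insert i S) a = d i (commProd d hcomm S a) := by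
  rw [commProd_insert d hcomm h, Module.End.mul_apply]

theorem commProd_apply_mul (hder : ∀ i x y, d i (x * y) = d i x * y + x * d i y)
    (S : Finset ι) (a b : A) :
    commProd d hcomm S (a * b) =
      ∑ P ∈ S.powerset, commProd d hcomm P a * commProd d hcomm (S \ P) b := by
  induction S using Finset.induction_on with
  | empty => simp
  | insert i S hi ih =>
    have hiP : ∀ P ∈ S.powerset, i ∉ P := fun P hP h => hi (mem_powerset.1 hP h)
    rw [commProd_insert_apply d hcomm hi, ih, map_sum, sum_powerset_insert hi, add_comm]
    simp only [hder, sum_add_distrib]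
    congr 1
    · refine sum_congr rfl fun P hP => ?_
      rw [commProd_insert_apply d hcomm (hiP P hP), insert_sdiff_insert, sdiff_insert_of_notMem hi]
    · refine sum_congr rfl fun P hP => ?_
      rw [insert_sdiff_of_notMem _ (hiP P hP),
        commProd_insert_apply d hcomm fun h => hi (mem_sdiff.1 h).1]

theorem commProd_apply_mul_commProd_apply_eq_zero (hprod : ∀ i x y, d i x * d i y = 0)
    {P Q : Finset ι} (h : ¬Disjoint P Q) (a b : A) :
    commProd d hcomm P a * commProd d hcomm Q b = 0 := by
  obtain ⟨i, hiP, hiQ⟩ := not_disjoint_iff.1 h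
  rw [commProd_eq_mul_erase d hcomm hiP, commProd_eq_mul_erase d hcomm hiQ,
    Module.End.mul_apply, Module.End.mul_apply, hprod]

end Derivation

section RingDerivation

variable {ι R A : Type*} [DecidableEq ι] [Ring R] [NonUnitalNonAssocRing A] [Module R A]
  (d : ι → Module.End R A) (hcomm : ∀ i j, Commute (d i) (d j))

theorem mul_commProd_apply (hder : ∀ i x y, d i (x * y) = d i x * y + x * d i y)
    (S : Finset ι) (x a : A) :
    x * commProd d hcomm S a =
      ∑ P ∈ S.powerset,
        (-1 : R) ^ #P • commProd d hcomm (S \ P) (commProd d hcomm P x * a) := by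
  induction S using Finset.induction_on generalizing x with
  | empty => simp
  | insert i S hi ih =>
    have hiP : ∀ P ∈ S.powerset, i ∉ P := fun P hP h => hi (mem_powerset.1 hP h)
    have hx : x * commProd d hcomm (insert i S) a =
        d i (x * commProd d hcomm S a) - d i x * commProd d hcomm S a := by
      rw [commProd_insert_apply d hcomm hi, hder, add_sub_cancel_left]
    rw [hx, ih x, ih (d i x), map_sum, sum_powerset_insert hi, sub_eq_add_neg, ← sum_neg_distrib]
    congr 1
    · refine sum_congr rfl fun P hP => ?_
      rw [map_smul, insert_sdiff_of_notMem _ (hiP P hP),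
        commProd_insert_apply d hcomm (fun h => hi (mem_sdiff.1 h).1)]
    · refine sum_congr rfl fun P hP => ?_
      rw [insert_sdiff_insert, sdiff_insert_of_notMem hi, commProd_insert' d hcomm (hiP P hP),
        Module.End.mul_apply, card_insert_of_notMem (hiP P hP), pow_succ, mul_neg_one, neg_smul]

theorem commProd_apply_commProd_apply_mul_eq_zero
    (hder : ∀ i x y, d i (x * y) = d i x * y + x * d i y) (hsq : ∀ i, d i * d i = 0)
    (hprod : ∀ i x y, d i x * d i y = 0) {P Q : Finset ι} (h : ¬Disjoint P Q) (x a : A) :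
    commProd d hcomm Q (commProd d hcomm P x * a) = 0 := by
  obtain ⟨i, hiP, hiQ⟩ := not_disjoint_iff.1 h
  have hdd : ∀ y, d i (d i y) = 0 := fun y => by
    rw [← Module.End.mul_apply, hsq, LinearMap.zero_apply]
  rw [commProd_eq_mul_erase d hcomm hiP, commProd_eq_erase_mul d hcomm hiQ,
    Module.End.mul_apply, Module.End.mul_apply, hder, hdd, hprod, zero_mul, add_zero, map_zero]

end RingDerivation

section Uop

variable {F A : Type*} [Field F] [NonUnitalNonAssocRing A] [Module F A] {n : ℕ}
  (d : Fin n → Module.End F A)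

theorem Uop_eq_sum_commProd (hcomm : ∀ i j, Commute (d i) (d j)) (k : ℕ) :
    Uop d k = ∑ S ∈ powersetCard k univ, commProd d hcomm S :=
  sum_congr rfl fun S _ => (commProd_eq_prod_sort d hcomm S).symm

theorem Uop_apply_eq_sum_commProd (hcomm : ∀ i j, Commute (d i) (d j)) (k : ℕ) (a : A) :
    Uop d k a = ∑ S ∈ powersetCard k univ, commProd d hcomm S a := by
  rw [Uop_eq_sum_commProd d hcomm, LinearMap.sum_apply]

theorem sum_Uop_eq_commProd_one_add (hcomm : ∀ i j, Commute (d i) (d j)) :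
    ∑ k ∈ range (n + 1), Uop d k =
      commProd (fun i => 1 + d i) (commute_one_add hcomm) univ := by
  rw [commProd_one_add d hcomm, sum_powerset, card_univ, Fintype.card_fin]
  exact sum_congr rfl fun k _ => Uop_eq_sum_commProd d hcomm k

theorem Uop_apply_mul (hcomm : ∀ i j, Commute (d i) (d j))
    (hder : ∀ i x y, d i (x * y) = d i x * y + x * d i y)
    (hprod : ∀ i x y, d i x * d i y = 0) (a b : A) (m : ℕ) :
    Uop d m (a * b) = ∑ i ∈ range (m + 1), Uop d i a * Uop d (m - i) b := by
  simp only [Uop_apply_eq_sum_commProd d hcomm, commProd_apply_mul d hcomm hder, sum_mul_sum]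
  exact sum_powersetCard_sum_powerset_sdiff _ m _
    fun P Q h => commProd_apply_mul_commProd_apply_eq_zero d hcomm hprod h a b

theorem mul_Uop_apply (hcomm : ∀ i j, Commute (d i) (d j))
    (hder : ∀ i x y, d i (x * y) = d i x * y + x * d i y) (hsq : ∀ i, d i * d i = 0)
    (hprod : ∀ i x y, d i x * d i y = 0) (a x : A) (m : ℕ) :
    x * Uop d m a = ∑ i ∈ range (m + 1), (-1 : F) ^ i • Uop d (m - i) (Uop d i x * a) := by
  simp only [Uop_apply_eq_sum_commProd d hcomm, mul_sum, mul_commProd_apply d hcomm hder,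
    sum_mul, map_sum, smul_sum]
  rw [sum_powersetCard_sum_powerset_sdiff _ m
    (fun P Q => (-1 : F) ^ #P • commProd d hcomm Q (commProd d hcomm P x * a)) fun P Q h => by
      rw [commProd_apply_commProd_apply_mul_eq_zero d hcomm hder hsq hprod h, smul_zero]]
  refine sum_congr rfl fun i _ => ?_
  rw [sum_comm]
  exact sum_congr rfl fun _ _ => sum_congr rfl fun P hP => by rw [(mem_powersetCard.1 hP).2]

theorem Uop_mul_Uop (hcomm : ∀ i j, Commute (d i) (d j)) (hsq : ∀ i, d i * d i = 0)
    (i j : ℕ) : Uop d i * Uop d j = (i + j).choose i • Uop d (i + j) := by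
  rw [Uop_eq_sum_commProd d hcomm, Uop_eq_sum_commProd d hcomm, Uop_eq_sum_commProd d hcomm,
    sum_mul_sum, sum_powersetCard_sum_powersetCard_of_disjoint _ i j _
      fun P Q h => commProd_mul_commProd_eq_zero d hcomm hsq h, smul_sum]
  refine sum_congr rfl fun S hS => ?_
  have hterm : ∀ P ∈ powersetCard i S, commProd d hcomm P * commProd d hcomm (S \ P) =
      commProd d hcomm S := fun P hP => by
    rw [← commProd_union d hcomm disjoint_sdiff, union_sdiff_of_subset (mem_powersetCard.1 hP).1]
  rw [sum_congr rfl hterm, sum_const, card_powersetCard, (mem_powersetCard.1 hS).2]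

end Uop

def Module.End.mulPreserving (R A : Type*) [Semiring R] [NonUnitalNonAssocSemiring A]
    [Module R A] : Submonoid (Module.End R A) where
  carrier := {f | ∀ a b, f (a * b) = f a * f b}
  one_mem' _ _ := rfl
  mul_mem' {f g} hf hg a b := by rw [Module.End.mul_apply, hg a b, hf (g a) (g b)]; rfl

theorem one_add_mem_mulPreserving {R A : Type*} [Semiring R] [NonUnitalNonAssocSemiring A]
    [Module R A] {D : Module.End R A} (hD : ∀ x y, D (x * y) = D x * y + x * D y)
    (hprod : ∀ x y, D x * D y = 0) : 1 + D ∈ Module.End.mulPreserving R A := fun a b => by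
  simp only [LinearMap.add_apply, Module.End.one_apply, hD, add_mul, mul_add, hprod, add_zero]
  abel

theorem Uop_properties_general
    {F : Type*} {A : Type*} [Field F] [NonUnitalNonAssocRing A] [Module F A]
    {n : ℕ} (d : Fin n → Module.End F A)
    (hder : ∀ i : Fin n, ∀ x y : A, d i (x * y) = (d i x) * y + x * (d i y))
    (hcomm : ∀ i j : Fin n, Commute (d i) (d j))
    (hsq : ∀ i : Fin n, d i * d i = 0)
    (hprod : ∀ i : Fin n, ∀ x y : A, (d i x) * (d i y) = 0) :
    (∀ (a b : A) (m : ℕ),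
        Uop d m (a * b) = ∑ i ∈ Finset.range (m + 1), (Uop d i a) * (Uop d (m - i) b)) ∧
    (Function.Bijective (fun a : A => ∑ i ∈ Finset.range (n + 1), Uop d i a) ∧
      ∀ a b : A, (∑ i ∈ Finset.range (n + 1), Uop d i (a * b)) =
        (∑ i ∈ Finset.range (n + 1), Uop d i a) * (∑ i ∈ Finset.range (n + 1), Uop d i b)) ∧
    (∀ (a x : A) (m : ℕ),
        x * (Uop d m a) =
          ∑ i ∈ Finset.range (m + 1), ((-1 : F) ^ i) • (Uop d (m - i)) ((Uop d i x) * a)) ∧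
    (∀ i j : ℕ, Uop d i * Uop d j = ((i + j).choose i) • Uop d (i + j)) := by
  set E := commProd (fun i => 1 + d i) (commute_one_add hcomm) univ with hE_def
  have hE : ∀ a, ∑ i ∈ range (n + 1), Uop d i a = E a := fun a => by
    rw [hE_def, ← sum_Uop_eq_commProd_one_add d hcomm, LinearMap.sum_apply]
  refine ⟨Uop_apply_mul d hcomm hder hprod, ⟨?_, fun a b => ?_⟩,
    mul_Uop_apply d hcomm hder hsq hprod, Uop_mul_Uop d hcomm hsq⟩
  · have hunit : IsUnit E := commProd_mem _ _ (IsUnit.submonoid _)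
      (fun i => IsNilpotent.isUnit_one_add ⟨2, by rw [sq, hsq]⟩) univ
    simpa only [hE] using (Module.End.isUnit_iff E).1 hunit
  · simp only [hE]
    exact commProd_mem _ _ (Module.End.mulPreserving F A)
      (fun i => one_add_mem_mulPreserving (hder i) (hprod i)) univ a b

/-- Basic properties of the divided-power operators `U_k` built from commuting square-zero
derivations `d_1, …, d_n` of a (not necessarily associative) algebra `A` with
`(x·d_i)(y·d_i) = 0`. -/
theorem Uop_properties
    {F : Type*} {A : Type*} [Field F] [NonUnitalNonAssocRing A] [Module F A]
    [SMulCommClass F A A] [IsScalarTower F A A]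
    {n : ℕ} (d : Fin n → Module.End F A)
    (hder : ∀ i : Fin n, ∀ x y : A, d i (x * y) = (d i x) * y + x * (d i y))
    (hcomm : ∀ i j : Fin n, Commute (d i) (d j))
    (hsq : ∀ i : Fin n, d i * d i = 0)
    (hprod : ∀ i : Fin n, ∀ x y : A, (d i x) * (d i y) = 0) :
    (∀ (a b : A) (m : ℕ),
        Uop d m (a * b) = ∑ i ∈ Finset.range (m + 1), (Uop d i a) * (Uop d (m - i) b)) ∧
    (Function.Bijective (fun a : A => ∑ i ∈ Finset.range (n + 1), Uop d i a) ∧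
      ∀ a b : A, (∑ i ∈ Finset.range (n + 1), Uop d i (a * b)) =
        (∑ i ∈ Finset.range (n + 1), Uop d i a) * (∑ i ∈ Finset.range (n + 1), Uop d i b)) ∧
    (∀ (a x : A) (m : ℕ),
        x * (Uop d m a) =
          ∑ i ∈ Finset.range (m + 1), ((-1 : F) ^ i) • (Uop d (m - i)) ((Uop d i x) * a)) ∧
    (∀ i j : ℕ, Uop d i * Uop d j = ((i + j).choose i) • Uop d (i + j)) :=
  Uop_properties_general d hder hcomm hsq hprod
end

section
/- Let L be a Lie algebra over a field F and let d_1, …, d_n be derivations of L such that d_i ∘ d_j = d_j ∘ d_i for all i, j, d_i ∘ d_i = 0 for all i, and ⁅x·d_i, y·d_i⁆ = 0 for all x, y ∈ L and all i. Let U_k = U_k(d_1, …, d_n), let m ≥ 1, and suppose U_k = 0 for all k ≥ m. Then: (1) if m ≥ 2, then ⁅a U_{m−1}, b U_{m−1}⁆ = 0 for arbitrary a, b ∈ L; (2) if m ≥ 4, then for any k ≥ m − 1 and arbitrary elements a_1, …, a_k ∈ L one has ad(a_1 U_{m−1}) ∘ ad(a_2 U_{m−1}) ∘ ⋯ ∘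 ad(a_k U_{m−1}) = 0 as an operator on L. -/
open Finset Polynomial

universe u

section CommRing
variable {R : Type*} [CommRing R] {ι : Type*}

theorem coeff_prod_one_add_X_mul_C (s : Finset ι) (r : ι → R) (k : ℕ) :
    (∏ i ∈ s, (1 + X * C (r i))).coeff k = (s.val.map r).esymm k := by
  classical
  simp_rw [prod_one_add, prod_mul_distrib, prod_const, ← map_prod, finsetSum_coeff,
    coeff_X_pow_mul', Finset.esymm_map_val, powersetCard_eq_filter, sum_filter]
  refine sum_congr rfl fun t _ => ?_
  rw [coeff_C]
  split_ifs <;> first | rfl | omega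

theorem prod_one_add_X_mul_C_mul_prod_one_add_X_mul_C_neg (s : Finset ι) (r : ι → R)
    (hr : ∀ i ∈ s, r i * r i = 0) :
    (∏ i ∈ s, (1 + X * C (r i))) * ∏ i ∈ s, (1 + X * C (-r i)) = 1 := by
  rw [← prod_mul_distrib]
  refine prod_eq_one fun i hi => ?_
  rw [map_neg, mul_neg, ← sub_eq_add_neg, ← mul_self_sub_mul_self, one_mul,
    mul_mul_mul_comm, ← map_mul, hr i hi, map_zero, mul_zero, sub_zero]

end CommRing

section Uop
variable {F A : Type*} [Field F] [AddCommGroup A] [Module F A] {n : ℕ}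

theorem Uop_eq_zero_of_lt (d : Fin n → Module.End F A) {k : ℕ} (hk : n < k) : Uop d k = 0 := by
  rw [Uop, powersetCard_eq_empty.2 (by simpa using hk), sum_empty]

theorem Uop_neg (d : Fin n → Module.End F A) (k : ℕ) : Uop (-d) k = (-1) ^ k * Uop d k := by
  rw [Uop, Uop, mul_sum]
  refine sum_congr rfl fun S hS => ?_
  rw [show (-d : Fin n → Module.End F A) = Neg.neg ∘ d from rfl, ← List.map_map,
    List.prod_map_neg, List.length_map, length_sort, (mem_powersetCard.1 hS).2]

theorem Uop_comp_ringHom {R : Type*} [CommRing R] (φ : R →+* Module.End F A) (r : Fin n → R)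
    (k : ℕ) : Uop (fun i => φ (r i)) k = φ ((univ.val.map r).esymm k) := by
  rw [Uop, Finset.esymm_map_val, map_sum]
  refine sum_congr rfl fun S _ => ?_
  rw [← Function.comp_def, ← List.map_map, ← map_list_prod, prod_eq_multiset_prod,
    ← sort_eq S (· ≤ ·), Multiset.map_coe, Multiset.prod_coe]

noncomputable def uopPoly (d : Fin n → Module.End F A) : (Module.End F A)[X] :=
  ∑ k ∈ range (n + 1), monomial k (Uop d k)

theorem coeff_uopPoly (d : Fin n → Module.End F A) (k : ℕ) : (uopPoly d).coeff k = Uop d k := by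
  simp only [uopPoly, finsetSum_coeff, coeff_monomial, sum_ite_eq', mem_range]
  split_ifs with hk
  · rfl
  · exact (Uop_eq_zero_of_lt d (by omega)).symm

theorem natDegree_uopPoly_le {d : Fin n → Module.End F A} {m : ℕ}
    (hU : ∀ k, m ≤ k → Uop d k = 0) : (uopPoly d).natDegree ≤ m - 1 := by
  rw [natDegree_le_iff_coeff_eq_zero]
  exact fun k hk => (coeff_uopPoly d k).trans (hU k (by omega))

theorem uopPoly_comp_ringHom {R : Type*} [CommRing R] (φ : R →+* Module.End F A) (r : Fin n → R) :
    uopPoly (fun i => φ (r i)) = (∏ i, (1 + X * C (r i))).map φ := by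
  ext k : 1
  rw [coeff_uopPoly, coeff_map, coeff_prod_one_add_X_mul_C, Uop_comp_ringHom]

theorem uopPoly_comp_mul_uopPoly_neg {R : Type*} [CommRing R] (φ : R →+* Module.End F A)
    (r : Fin n → R) (hr : ∀ i, r i * r i = 0) :
    uopPoly (fun i => φ (r i)) * uopPoly (-fun i => φ (r i)) = 1 := by
  have hneg : (-fun i => φ (r i)) = fun i => φ (-r i) := funext fun i => (map_neg φ (r i)).symm
  rw [hneg, uopPoly_comp_ringHom, uopPoly_comp_ringHom, ← Polynomial.map_mul,
    prod_one_add_X_mul_C_mul_prod_one_add_X_mul_C_neg _ _ fun i _ => hr i, Polynomial.map_one]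

end Uop

open scoped IsMulCommutative in
theorem exists_injective_ringHom_of_commute {ι : Type*} {A : Type u} [Ring A] {d : ι → A}
    (hcomm : ∀ i j, Commute (d i) (d j)) :
    ∃ (R : Type u) (_ : CommRing R) (φ : R →+* A) (r : ι → R),
      Function.Injective φ ∧ (fun i => φ (r i)) = d := by
  have := Subring.isMulCommutative_closure (s := Set.range d)
    (by rintro _ ⟨i, rfl⟩ _ ⟨j, rfl⟩; exact hcomm i j)
  exact ⟨Subring.closure (Set.range d), inferInstance, (Subring.closure (Set.range d)).subtype,
    fun i => ⟨d i, Subring.subset_closure ⟨i, rfl⟩⟩, Subtype.val_injective, rfl⟩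

section Leibniz
variable {F L : Type*} [Field F] [LieRing L] [LieAlgebra F L]

/-- The coefficientwise form of: `P(t) = ∑ P_N t^N` is a Lie algebra endomorphism of `L[t]`. -/
def IsLieLeibniz (P : (Module.End F L)[X]) : Prop :=
  ∀ N (x y : L), P.coeff N ⁅x, y⁆ = ∑ pq ∈ antidiagonal N, ⁅P.coeff pq.1 x, P.coeff pq.2 y⁆

theorem isLieLeibniz_one : IsLieLeibniz (1 : (Module.End F L)[X]) := by
  intro N x y
  cases N with
  | zero => simp
  | succ N =>
    rw [Nat.sum_antidiagonal_succ]
    simp [coeff_one]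

theorem IsLieLeibniz.one_add_X_mul_C_mul {P : (Module.End F L)[X]} (hP : IsLieLeibniz P)
    {D : Module.End F L} (hD : ∀ x y, D ⁅x, y⁆ = ⁅D x, y⁆ + ⁅x, D y⁆)
    (hD2 : ∀ x y, ⁅D x, D y⁆ = 0) : IsLieLeibniz ((1 + X * C D) * P) := by
  set Q := X * (C D * P) with hQ
  have hQ0 : Q.coeff 0 = 0 := coeff_X_mul_zero _
  have hQsucc : ∀ p, Q.coeff (p + 1) = D * P.coeff p := fun p => by
    rw [hQ, coeff_X_mul, coeff_C_mul]
  have hQQ : ∀ p q x y, ⁅Q.coeff p x, Q.coeff q y⁆ = 0 := by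
    rintro (_ | p) (_ | q) x y <;> simp [hQ0, hQsucc, hD2]
  rw [add_mul, one_mul, mul_assoc, ← hQ]
  intro N x y
  cases N with
  | zero => simpa [hQ0] using hP 0 x y
  | succ N =>
    have hleft : ∑ pq ∈ antidiagonal (N + 1), ⁅Q.coeff pq.1 x, P.coeff pq.2 y⁆ =
        ∑ pq ∈ antidiagonal N, ⁅D (P.coeff pq.1 x), P.coeff pq.2 y⁆ := by
      simp [Nat.sum_antidiagonal_succ, hQ0, hQsucc]
    have hright : ∑ pq ∈ antidiagonal (N + 1), ⁅P.coeff pq.1 x, Q.coeff pq.2 y⁆ =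
        ∑ pq ∈ antidiagonal N, ⁅P.coeff pq.1 x, D (P.coeff pq.2 y)⁆ := by
      simp [Nat.sum_antidiagonal_succ', hQ0, hQsucc]
    simp only [coeff_add, LinearMap.add_apply, add_lie, lie_add, sum_add_distrib, hQQ, add_zero,
      hleft, hright, hQsucc, Module.End.mul_apply]
    rw [hP, hP, map_sum]
    simp only [hD, sum_add_distrib, add_assoc]

theorem isLieLeibniz_map_prod_one_add_X_mul_C {R ι : Type*} [CommRing R]
    (φ : R →+* Module.End F L) (r : ι → R) (s : Finset ι)
    (hder : ∀ i ∈ s, ∀ x y : L, φ (r i) ⁅x, y⁆ = ⁅φ (r i) x, y⁆ + ⁅x, φ (r i) y⁆)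
    (hbr : ∀ i ∈ s, ∀ x y : L, ⁅φ (r i) x, φ (r i) y⁆ = 0) :
    IsLieLeibniz ((∏ i ∈ s, (1 + X * C (r i))).map φ) := by
  classical
  induction s using Finset.induction_on with
  | empty => simpa using isLieLeibniz_one
  | insert i s hi ih =>
    rw [prod_insert hi, Polynomial.map_mul]
    simp only [Polynomial.map_add, Polynomial.map_one, Polynomial.map_mul, map_X, map_C]
    exact (ih (fun j hj => hder j (mem_insert_of_mem hj)) fun j hj => hbr j (mem_insert_of_mem hj)
      ).one_add_X_mul_C_mul (hder i (mem_insert_self i s)) (hbr i (mem_insert_self i s))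

theorem IsLieLeibniz.lie_coeff_eq_zero {P : (Module.End F L)[X]} (hP : IsLieLeibniz P) {D : ℕ}
    (hdeg : P.natDegree ≤ D) (hD : 0 < D) (a b : L) : ⁅P.coeff D a, P.coeff D b⁆ = 0 := by
  have htop := hP (D + D) a b
  rw [coeff_eq_zero_of_natDegree_lt (by omega), LinearMap.zero_apply,
    sum_eq_single_of_mem (D, D) (HasAntidiagonal.mem_antidiagonal.2 rfl)] at htop
  · exact htop.symm
  · rintro ⟨p, q⟩ hpq hne
    rw [HasAntidiagonal.mem_antidiagonal] at hpq
    rcases lt_or_ge D p with hp | hp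
    · rw [coeff_eq_zero_of_natDegree_lt (hdeg.trans_lt hp), LinearMap.zero_apply, zero_lie]
    · rw [coeff_eq_zero_of_natDegree_lt (show P.natDegree < q by grind), LinearMap.zero_apply,
        lie_zero]

theorem isLieLeibniz_uopPoly_comp {R : Type*} [CommRing R] {n : ℕ} (φ : R →+* Module.End F L)
    (r : Fin n → R) (hder : ∀ i (x y : L), φ (r i) ⁅x, y⁆ = ⁅φ (r i) x, y⁆ + ⁅x, φ (r i) y⁆)
    (hbr : ∀ i (x y : L), ⁅φ (r i) x, φ (r i) y⁆ = 0) :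
    IsLieLeibniz (uopPoly fun i => φ (r i)) := by
  rw [uopPoly_comp_ringHom]
  exact isLieLeibniz_map_prod_one_add_X_mul_C φ r univ (fun i _ => hder i) fun i _ => hbr i

noncomputable def adPoly (P : (Module.End F L)[X]) (z : L) : (Module.End F L)[X] :=
  ∑ p ∈ range (P.natDegree + 1), monomial p (LieAlgebra.ad F L (P.coeff p z))

theorem coeff_adPoly (P : (Module.End F L)[X]) (z : L) (p : ℕ) :
    (adPoly P z).coeff p = LieAlgebra.ad F L (P.coeff p z) := by
  simp only [adPoly, finsetSum_coeff, coeff_monomial, sum_ite_eq', mem_range]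
  split_ifs with hp
  · rfl
  · rw [coeff_eq_zero_of_natDegree_lt (by omega), LinearMap.zero_apply, map_zero]

theorem natDegree_adPoly_le (P : (Module.End F L)[X]) (z : L) :
    (adPoly P z).natDegree ≤ P.natDegree := by
  rw [natDegree_le_iff_coeff_eq_zero]
  intro p hp
  rw [coeff_adPoly, coeff_eq_zero_of_natDegree_lt hp, LinearMap.zero_apply, map_zero]

theorem IsLieLeibniz.adPoly_mul {P : (Module.End F L)[X]} (hP : IsLieLeibniz P) (z : L) :
    adPoly P z * P = P * C (LieAlgebra.ad F L z) := by
  ext N y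
  rw [coeff_mul_C, coeff_mul, LinearMap.sum_apply, Module.End.mul_apply, LieAlgebra.ad_apply, hP]
  simp only [coeff_adPoly, Module.End.mul_apply, LieAlgebra.ad_apply]

theorem IsLieLeibniz.list_prod_adPoly_mul {P : (Module.End F L)[X]} (hP : IsLieLeibniz P)
    (l : List L) :
    (l.map (adPoly P)).prod * P = P * C (l.map (LieAlgebra.ad F L ·)).prod := by
  induction l with
  | nil => simp
  | cons z l ih =>
    rw [List.map_cons, List.prod_cons, List.map_cons, List.prod_cons, mul_assoc, ih,
      ← mul_assoc, hP.adPoly_mul, mul_assoc, ← map_mul]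

theorem IsLieLeibniz.list_prod_ad_coeff_eq_zero {P Q : (Module.End F L)[X]} (hP : IsLieLeibniz P)
    (hPQ : P * Q = 1) {D : ℕ} (hPdeg : P.natDegree ≤ D) (hQdeg : Q.natDegree ≤ D) (hD : 0 < D)
    (l : List L) (hl : 3 ≤ l.length) :
    (l.map fun a => LieAlgebra.ad F L (P.coeff D a)).prod = 0 := by
  have hconj : (l.map (adPoly P)).prod = P * C (l.map (LieAlgebra.ad F L ·)).prod * Q := by
    rw [← hP.list_prod_adPoly_mul, mul_assoc, hPQ, mul_one]
  have hdeg : (P * C (l.map (LieAlgebra.ad F L ·)).prod * Q).natDegree < l.length * D := by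
    have h1 := natDegree_mul_le (p := P * C (l.map (LieAlgebra.ad F L ·)).prod) (q := Q)
    have h2 := natDegree_mul_le (p := P) (q := C (l.map (LieAlgebra.ad F L ·)).prod)
    rw [natDegree_C] at h2
    nlinarith
  have htop := coeff_list_prod_of_natDegree_le (l.map (adPoly P)) D
    (by simpa using fun a _ => (natDegree_adPoly_le P a).trans hPdeg)
  rw [List.length_map, hconj, coeff_eq_zero_of_natDegree_lt hdeg, List.map_map] at htop
  simpa [Function.comp_def, coeff_adPoly] using htop.symm

end Leibniz

theorem linearized_kostrikin_general
    {F : Type*} {L : Type*} [Field F] [LieRing L] [LieAlgebra F L]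
    {n : ℕ} (d : Fin n → Module.End F L)
    (hder : ∀ i : Fin n, ∀ x y : L, d i ⁅x, y⁆ = ⁅d i x, y⁆ + ⁅x, d i y⁆)
    (hcomm : ∀ i j : Fin n, Commute (d i) (d j))
    (hsq : ∀ i : Fin n, d i * d i = 0)
    (hbr : ∀ i : Fin n, ∀ x y : L, ⁅d i x, d i y⁆ = 0)
    (m : ℕ) (hU : ∀ k : ℕ, m ≤ k → Uop d k = 0) :
    (2 ≤ m → ∀ a b : L, ⁅Uop d (m - 1) a, Uop d (m - 1) b⁆ = 0) ∧
    (4 ≤ m → ∀ k : ℕ, m - 1 ≤ k → ∀ a : ℕ → L,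
      (List.ofFn fun j : Fin k => LieAlgebra.ad F L (Uop d (m - 1) (a j))).prod = 0) := by
  obtain ⟨R, _, φ, r, hφ, rfl⟩ := exists_injective_ringHom_of_commute hcomm
  have hG := isLieLeibniz_uopPoly_comp φ r hder hbr
  have hGH := uopPoly_comp_mul_uopPoly_neg φ r fun i => hφ (by rw [map_mul, map_zero]; exact hsq i)
  have hGdeg := natDegree_uopPoly_le hU
  have hHdeg : (uopPoly (-fun i => φ (r i))).natDegree ≤ m - 1 :=
    natDegree_uopPoly_le fun k hk => by rw [Uop_neg, hU k hk, mul_zero]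
  simp only [← coeff_uopPoly]
  refine ⟨fun hm a b => hG.lie_coeff_eq_zero hGdeg (by omega) a b, fun hm k hk a => ?_⟩
  have := hG.list_prod_ad_coeff_eq_zero hGH hGdeg hHdeg (by omega) (List.ofFn fun j : Fin k => a j)
    (by simp only [List.length_ofFn]; omega)
  rwa [List.map_ofFn] at this

/-- The linearized Kostrikin lemma: if `d_1, …, d_n` are commuting square-zero derivations of a
Lie algebra `L` with `⁅x d_i, y d_i⁆ = 0`, and `U_k = 0` for all `k ≥ m`, then
(1) for `m ≥ 2`, `⁅aU_{m-1}, bU_{m-1}⁆ = 0`, and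
(2) for `m ≥ 4`, any composition of at least `m - 1` operators `ad(a_j U_{m-1})` vanishes. -/
theorem linearized_kostrikin
    {F : Type*} {L : Type*} [Field F] [LieRing L] [LieAlgebra F L]
    {n : ℕ} (d : Fin n → Module.End F L)
    (hder : ∀ i : Fin n, ∀ x y : L, d i ⁅x, y⁆ = ⁅d i x, y⁆ + ⁅x, d i y⁆)
    (hcomm : ∀ i j : Fin n, Commute (d i) (d j))
    (hsq : ∀ i : Fin n, d i * d i = 0)
    (hbr : ∀ i : Fin n, ∀ x y : L, ⁅d i x, d i y⁆ = 0)
    (m : ℕ) (hm : 1 ≤ m) (hU : ∀ k : ℕ, m ≤ k → Uop d k = 0) :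
    (2 ≤ m → ∀ a b : L, ⁅Uop d (m - 1) a, Uop d (m - 1) b⁆ = 0) ∧
    (4 ≤ m → ∀ k : ℕ, m - 1 ≤ k → ∀ a : ℕ → L,
      (List.ofFn fun j : Fin k => LieAlgebra.ad F L (Uop d (m - 1) (a j))).prod = 0) :=
  linearized_kostrikin_general d hder hcomm hsq hbr m hU
end

section
/- Let L be a Lie algebra over a field F and let Ω = {a_1, …, a_n} ⊆ L be a finite family of elements. Let Ω = Ω_1 ⊔ ⋯ ⊔ Ω_s and Ω = Ω'_1 ⊔ ⋯ ⊔ Ω'_t be two partitions of Ω. Set b_k = Σ_{a_i ∈ Ω_k} a_i and c_ℓ = Σ_{a_j ∈ Ω'_ℓ} a_j. Suppose that whenever a_i and a_j lie in the same block Ω_k or in the same block Ω'_ℓ (including the case i = j), one has ad(a_i) ∘ ad(a_j) = 0. Then Σ_{1≤k_1<k_2≤s} ad(b_{k_1}) ∘ ad(b_{k_2}) − Σ_{1≤ℓ_1<ℓ_2≤t} ad(c_{ℓ_1}) ∘ ad(c_{ℓ_2}) lies in the F-linear span of the operators ad(⁅a_i, a_j⁆), 1 ≤ i, j ≤ n.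 -/
/-!
Modulo the span `S` of the operators `ad ⁅a i, a j⁆`, the operators `ad (a i)` and `ad (a j)`
commute, so `ad (a i) * ad (a j)` depends only on the unordered pair `{i, j}`. Expanding the
block sums, the sum over pairs of blocks `k₁ < k₂` becomes the sum over the pairs of indices
`(i, j)` with `f i < f j`. Since products inside one block vanish, reorienting each such pair
by `i < j` turns it, modulo `S`, into `∑_{i < j} ad (a i) * ad (a j)`, which does not depend
on the partition.
-/

open Finset

namespace Finset

theorem sum_fiber_sum_mul_fiber_sum {ι κ R : Type*} [Fintype ι] [Fintype κ] [DecidableEq κ]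
    [NonUnitalNonAssocSemiring R] (r : κ → κ → Prop) [DecidableRel r] (f : ι → κ) (x : ι → R) :
    ∑ p ∈ univ.filter (fun p : κ × κ => r p.1 p.2),
        (∑ i ∈ univ.filter (fun i => f i = p.1), x i) *
          ∑ i ∈ univ.filter (fun i => f i = p.2), x i =
      ∑ p ∈ univ.filter (fun p : ι × ι => r (f p.1) (f p.2)), x p.1 * x p.2 := by
  have block_product (p : κ × κ) :
      (∑ i ∈ univ.filter (fun i => f i = p.1), x i) * ∑ i ∈ univ.filter (fun i => f i = p.2), x i =
        ∑ q ∈ univ.filter (fun q : ι × ι => (f q.1, f q.2) = p), x q.1 * x q.2 := by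
    rw [sum_mul_sum, ← sum_product']
    congr 1
    ext q
    simp [Prod.ext_iff]
  simp_rw [block_product, sum_fiberwise_eq_sum_filter, mem_filter, mem_univ, true_and]

theorem sum_filter_comp_lt_eq_sum_filter_lt {ι κ M : Type*} [Fintype ι] [LinearOrder ι]
    [LinearOrder κ] [AddCommMonoid M] (f : ι → κ) (q : ι → ι → M) (hsym : ∀ i j, q i j = q j i)
    (hq : ∀ i j, f i = f j → q i j = 0) :
    ∑ p ∈ univ.filter (fun p : ι × ι => f p.1 < f p.2), q p.1 p.2 =
      ∑ p ∈ univ.filter (fun p : ι × ι => p.1 < p.2), q p.1 p.2 := by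
  symm
  -- Drop the pairs inside one block, then reorient each remaining pair by its blocks.
  rw [← sum_filter_of_ne (p := fun p : ι × ι => f p.1 ≠ f p.2)
    (fun p _ hp h => hp (hq p.1 p.2 h)), filter_filter]
  refine sum_nbij' (fun p => if f p.1 < f p.2 then p else p.swap)
    (fun p => if p.1 < p.2 then p else p.swap) ?_ ?_ ?_ ?_ ?_
  iterate 4
    · intro p hp
      simp only [mem_filter, mem_univ, true_and] at hp ⊢
      split_ifs <;> grind
  · intro p _
    split_ifs
    · rfl
    · exact hsym _ _

end Finset

theorem LieAlgebra.ad_mul_ad_sub_ad_mul_ad (R L : Type*) [CommRing R] [LieRing L] [LieAlgebra R L]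
    (x y : L) :
    ad R L x * ad R L y - ad R L y * ad R L x = ad R L ⁅x, y⁆ := by
  ext z
  simp only [LinearMap.sub_apply, Module.End.mul_apply, ad_apply]
  rw [leibniz_lie, add_sub_cancel_right]

/-- Lemma 40: given two partitions (as block-assignment maps `f`, `g`) of a family
`a_1, …, a_n` in a Lie algebra such that `ad(a_i) ∘ ad(a_j) = 0` whenever `a_i, a_j` lie in
the same block of either partition, the difference of the two sums
`Σ_{k₁<k₂} ad(b_{k₁}) ∘ ad(b_{k₂})` and `Σ_{ℓ₁<ℓ₂} ad(c_{ℓ₁}) ∘ ad(c_{ℓ₂})` of block sums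
lies in the span of the operators `ad(⁅a_i, a_j⁆)`. -/
theorem partition_sum_difference_mem_span
    {F : Type*} {L : Type*} [Field F] [LieRing L] [LieAlgebra F L]
    {n s t : ℕ} (a : Fin n → L) (f : Fin n → Fin s) (g : Fin n → Fin t)
    (h : ∀ i j : Fin n, (f i = f j ∨ g i = g j) →
      LieAlgebra.ad F L (a i) * LieAlgebra.ad F L (a j) = 0) :
    (∑ p ∈ Finset.univ.filter (fun p : Fin s × Fin s => p.1 < p.2),
        LieAlgebra.ad F L (∑ i ∈ Finset.univ.filter (fun i => f i = p.1), a i) *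
          LieAlgebra.ad F L (∑ i ∈ Finset.univ.filter (fun i => f i = p.2), a i)) -
      (∑ p ∈ Finset.univ.filter (fun p : Fin t × Fin t => p.1 < p.2),
        LieAlgebra.ad F L (∑ i ∈ Finset.univ.filter (fun i => g i = p.1), a i) *
          LieAlgebra.ad F L (∑ i ∈ Finset.univ.filter (fun i => g i = p.2), a i)) ∈
      Submodule.span F
        { E : Module.End F L | ∃ i j : Fin n, E = LieAlgebra.ad F L ⁅a i, a j⁆ } := by
  set S := Submodule.span F
    { E : Module.End F L | ∃ i j : Fin n, E = LieAlgebra.ad F L ⁅a i, a j⁆ }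
  set q : Fin n → Fin n → Module.End F L ⧸ S :=
    fun i j => S.mkQ (LieAlgebra.ad F L (a i) * LieAlgebra.ad F L (a j))
  have hq_symm (i j : Fin n) : q i j = q j i := by
    simp only [q, Submodule.mkQ_apply, Submodule.Quotient.eq,
      LieAlgebra.ad_mul_ad_sub_ad_mul_ad]
    exact Submodule.subset_span ⟨i, j, rfl⟩
  rw [← Submodule.ker_mkQ S, LinearMap.mem_ker, map_sub, sub_eq_zero]
  simp only [map_sum (LieAlgebra.ad F L)]
  rw [sum_fiber_sum_mul_fiber_sum, sum_fiber_sum_mul_fiber_sum, map_sum, map_sum]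
  refine (sum_filter_comp_lt_eq_sum_filter_lt f q hq_symm ?_).trans
    (sum_filter_comp_lt_eq_sum_filter_lt g q hq_symm ?_).symm
  · intro i j hij
    simp only [q, h i j (.inl hij), map_zero]
  · intro i j hij
    simp only [q, h i j (.inr hij), map_zero]
end

section
/- Let F be a field and let A = ⊕_{i≥1} A_i be an associative F-algebra graded by positive integers (A_i A_j ⊆ A_{i+j}) and generated by elements x_1, …, x_m of degree 1. Let L be the Lie subalgebra of A (with bracket ⁅u, v⁆ = uv − vu) generated by x_1, …, x_m. Suppose there are k ≥ 1 and scalars α_σ ∈ F indexed by the permutations σ of {1, …, k}, with α_id = 1, such that Σ_σ α_σ a_{σ(1)} a_{σ(2)} ⋯ a_{σ(k)} = 0 for all a_1, …, a_k ∈ L. Define h_k(a_1, …, a_{k−1}) = Σ_{σ : σ(k)=k} α_σ a_{σ(1)} ⋯ a_{σ(k−1)}. Let M be the two-sided ideal of A generated by all values h_k(a_1, …, a_{k−1}) with a_1, …, a_{k−1} ∈ L, and suppose d ≥ 1 satisfies A^d ⊆ M. Then for every a ∈ L, the set A^d·a is contained in the F-linear span of the elements x_{i_1} x_{i_2} ⋯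 x_{i_t}·a and x_{i_1} x_{i_2} ⋯ x_{i_t}·a·u, where 0 ≤ t ≤ d−1, 1 ≤ i_1, …, i_t ≤ m, and u ∈ A. -/
/-- Product of a nonempty list in a nonunital ring (empty list is sent to `0`). -/
def prodList {A : Type*} [Mul A] [Zero A] : List A → A
  | [] => 0
  | h :: t => t.foldl (· * ·) h

/-- Membership in the Lie subalgebra of an associative algebra `A` (with commutator bracket)
generated by the elements `x i`. -/
inductive InLieGen {F A : Type*} [Field F] [NonUnitalRing A] [Module F A]
    {m : ℕ} (x : Fin m → A) : A → Prop
  | gen (i : Fin m) : InLieGen x (x i)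
  | add {u v : A} : InLieGen x u → InLieGen x v → InLieGen x (u + v)
  | smul (c : F) {u : A} : InLieGen x u → InLieGen x (c • u)
  | br {u v : A} : InLieGen x u → InLieGen x v → InLieGen x (u * v - v * u)

/-- Membership in the (associative, non-unital) subalgebra of `A` generated by the `x i`. -/
inductive InAssocGen {F A : Type*} [Field F] [NonUnitalRing A] [Module F A]
    {m : ℕ} (x : Fin m → A) : A → Prop
  | gen (i : Fin m) : InAssocGen x (x i)
  | add {u v : A} : InAssocGen x u → InAssocGen x v → InAssocGen x (u + v)
  | smul (c : F) {u : A} : InAssocGen x u → InAssocGen x (c • u)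
  | mul {u v : A} : InAssocGen x u → InAssocGen x v → InAssocGen x (u * v)

/-- `h_k(a_1, …, a_{k-1}) = Σ_{σ(k) = k} α_σ a_{σ(1)} ⋯ a_{σ(k-1)}`. -/
noncomputable def hkPoly {F A : Type*} [Field F] [NonUnitalRing A] [Module F A]
    (k : ℕ) (hk : 1 ≤ k) (α : Equiv.Perm (Fin k) → F) (a : Fin (k - 1) → A) : A :=
  ∑ σ ∈ Finset.univ.filter
      (fun σ : Equiv.Perm (Fin k) => σ ⟨k - 1, by omega⟩ = ⟨k - 1, by omega⟩),
    α σ • prodList (List.ofFn fun i : Fin (k - 1) =>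
      (fun j : Fin k => if h : (j : ℕ) < k - 1 then a ⟨(j : ℕ), h⟩ else 0)
        (σ ⟨(i : ℕ), by omega⟩))

/-- `x_{i₁} x_{i₂} ⋯ x_{i_t} · a`, for a list of indices `l = [i₁, …, i_t]`. -/
def monApply {A : Type*} [Mul A] {m : ℕ} (x : Fin m → A) (l : List (Fin m)) (a : A) : A :=
  l.foldr (fun i acc => x i * acc) a

/-!
Every element of `A` is a combination of words in the `x_i`, and `w a` for a word `w` of length
`< d` already has the required form, so it suffices to show that `w a` lies in the span of the
`x_I a u` with `|I| < d` for every word `w` of length `≥ d`. Split `w = w₀ w₁` with `|w₀| = d`.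
Since `w₀ ∈ A^d ⊆ M` is homogeneous of degree `d`, it is a combination of products `u h(b) v` of
degree `d`, where `u, v` are words (or absent) and the `b_i` are homogeneous Lie elements.
The identity applied to `(b, a)` writes `h(b) a` as a combination of products in which `a` is
followed by a factor of positive degree, so `h(b) a` is a combination of `x_I a u` with
`|I| < deg h(b)`. Since `[h(b), x] = ∑ i, h(…, [b_i, x], …)`, moving `h(b)` to the right past the
letters of `v w₁` keeps this bound. Hence `w a` is a combination of `x_I a u` with `|I| < |w|`,
and induction on `|w|` finishes the proof.
-/

open Function Submodule Finset Equiv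

theorem prodList_cons {A : Type*} [Semigroup A] [Zero A] (y : A) {t : List A} (ht : t ≠ []) :
    prodList (y :: t) = y * prodList t := by
  induction t generalizing y with
  | nil => exact absurd rfl ht
  | cons z t ih =>
    rcases eq_or_ne t [] with rfl | ht'
    · rfl
    · calc prodList (y :: z :: t) = prodList (y * z :: t) := rfl
        _ = y * prodList (z :: t) := by rw [ih _ ht', ih _ ht', mul_assoc]

theorem prodList_append_singleton {A : Type*} [Mul A] [Zero A] {l : List A} (hl : l ≠ [])
    (y : A) : prodList (l ++ [y]) = prodList l * y := by
  obtain ⟨z, t, rfl⟩ := List.exists_cons_of_ne_nil hl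
  simp [prodList]

section Multilinear

variable (R A : Type*) [CommSemiring R] [NonUnitalSemiring A] [Module R A]

theorem Unitization.snd_prod_map_inr (l : List A) :
    ((l.map ((↑) : A → Unitization R A)).prod).snd = prodList l := by
  suffices h : ∀ y t, ((y :: t).map ((↑) : A → Unitization R A)).prod = ↑(prodList (y :: t)) by
    rcases l with _ | ⟨y, t⟩
    · simp [prodList]
    · rw [h, Unitization.snd_inr]
  intro y t
  induction t generalizing y with
  | nil => simp [prodList]
  | cons z t ih =>
    rw [List.map_cons, List.prod_cons, ih, ← Unitization.inr_mul,
      ← prodList_cons _ (List.cons_ne_nil z t)]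

variable [IsScalarTower R A A] [SMulCommClass R A A]

/-- `prodList` of `r` factors, computed in the unitization; for `r = 0` the empty product `1`
has second component `0 = prodList []`. -/
noncomputable def prodMultilinear (r : ℕ) : MultilinearMap R (fun _ : Fin r => A) A :=
  (Unitization.sndHom R R A).compMultilinearMap
    ((MultilinearMap.mkPiAlgebraFin R r (Unitization R A)).compLinearMap
      fun _ => Unitization.inrHom R R A)

variable {R A}

theorem prodMultilinear_apply {r : ℕ} (g : Fin r → A) :
    prodMultilinear R A r g = prodList (List.ofFn g) := by
  rw [← Unitization.snd_prod_map_inr R, List.map_ofFn]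
  rfl

end Multilinear


section Products

variable {R A : Type*} [CommSemiring R] [NonUnitalSemiring A] [Module R A]
  [IsScalarTower R A A] [SMulCommClass R A A]

theorem prodMultilinear_zero (g : Fin 0 → A) : prodMultilinear R A 0 g = 0 := by
  simp [prodMultilinear_apply, prodList]

theorem prodMultilinear_one (g : Fin 1 → A) : prodMultilinear R A 1 g = g 0 := by
  simp [prodMultilinear_apply, prodList]

theorem prodMultilinear_succ_succ {r : ℕ} (g : Fin (r + 2) → A) :
    prodMultilinear R A (r + 2) g = g 0 * prodMultilinear R A (r + 1) (Fin.tail g) := by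
  simp only [prodMultilinear_apply, List.ofFn_succ (n := r + 1)]
  exact prodList_cons _ (by simp)

theorem prodMultilinear_snoc {r : ℕ} (g : Fin (r + 1) → A) (y : A) :
    prodMultilinear R A (r + 2) (Fin.snoc g y) = prodMultilinear R A (r + 1) g * y := by
  simp only [prodMultilinear_apply, List.ofFn_succ' (n := r + 1), Fin.snoc_castSucc,
    Fin.snoc_last, List.concat_eq_append]
  exact prodList_append_singleton (by simp) y

theorem prodMultilinear_mem_grade (Agr : ℕ → Submodule R A) [SetLike.GradedMul Agr] :
    ∀ {r : ℕ} (g : Fin r → A) (ν : Fin r → ℕ), (∀ i, g i ∈ Agr (ν i)) →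
      prodMultilinear R A r g ∈ Agr (∑ i, ν i)
  | 0, g, _, _ => by simp [prodMultilinear_zero]
  | 1, g, ν, hg => by simpa [prodMultilinear_one] using hg 0
  | r + 2, g, ν, hg => by
    rw [prodMultilinear_succ_succ, Fin.sum_univ_succ]
    exact SetLike.mul_mem_graded (hg 0)
      (prodMultilinear_mem_grade Agr (Fin.tail g) _ fun i => hg i.succ)

end Products

theorem prodMultilinear_commutator {R A : Type*} [CommRing R] [NonUnitalRing A] [Module R A]
    [IsScalarTower R A A] [SMulCommClass R A A] (c : A) :
    ∀ {r : ℕ} (g : Fin r → A), prodMultilinear R A r g * c - c * prodMultilinear R A r g =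
      ∑ i, prodMultilinear R A r (update g i (g i * c - c * g i))
  | 0, g => by simp [prodMultilinear_zero]
  | 1, g => by simp [prodMultilinear_one]
  | r + 2, g => by
    have ih := prodMultilinear_commutator (R := R) c (Fin.tail g)
    rw [Fin.sum_univ_succ]
    simp only [prodMultilinear_succ_succ (R := R), update_self, Fin.tail_update_zero,
      Fin.tail_update_succ, fun i y => update_of_ne (Fin.succ_ne_zero i).symm y g]
    rw [← mul_sum]
    simp only [Fin.tail] at ih ⊢
    rw [← ih]
    noncomm_ring

section ExtendLast

variable {K : ℕ} (τ : Perm (Fin K))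

@[simp]
theorem Equiv.Perm.viaEmbedding_castSuccEmb_castSucc (i : Fin K) :
    τ.viaEmbedding Fin.castSuccEmb i.castSucc = (τ i).castSucc :=
  τ.viaEmbedding_apply Fin.castSuccEmb i

@[simp]
theorem Equiv.Perm.viaEmbedding_castSuccEmb_last :
    τ.viaEmbedding Fin.castSuccEmb (Fin.last K) = Fin.last K :=
  τ.viaEmbedding_apply_of_notMem _ _ (by simp)

theorem Equiv.Perm.sum_filter_apply_last_eq {M : Type*} [AddCommMonoid M]
    (f : Perm (Fin (K + 1)) → M) :
    ∑ σ ∈ univ.filter (fun σ : Perm (Fin (K + 1)) => σ (Fin.last K) = Fin.last K), f σ =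
      ∑ τ : Perm (Fin K), f (τ.viaEmbedding Fin.castSuccEmb) := by
  symm
  refine sum_bij (fun τ _ => τ.viaEmbedding Fin.castSuccEmb) (fun τ _ => by simp)
    (fun τ₁ _ τ₂ _ h => Perm.viaEmbeddingHom_injective _ h) (fun σ hσ => ?_) (fun _ _ => rfl)
  replace hσ : σ (Fin.last K) = Fin.last K := (mem_filter.mp hσ).2
  have hne (i : Fin K) : σ i.castSucc ≠ Fin.last K := fun h =>
    Fin.castSucc_ne_last i (σ.injective (h.trans hσ.symm))
  let τ : Perm (Fin K) := Equiv.ofBijective (fun i => (σ i.castSucc).castPred (hne i))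
    (Finite.injective_iff_bijective.mp fun i j h => by simpa using h)
  refine ⟨τ, mem_univ _, Equiv.ext fun j => ?_⟩
  cases j using Fin.lastCases with
  | last => simp [hσ]
  | cast i => simp [τ]

end ExtendLast

section HkPoly

variable {F A : Type*} [Field F] [NonUnitalRing A] [Module F A]
  [IsScalarTower F A A] [SMulCommClass F A A] {K : ℕ} (α : Perm (Fin (K + 1)) → F)

/-- `h_{K+1}`, with the permutations fixing the last index written as extensions of
permutations of `Fin K`. -/
noncomputable def hkMultilinear : MultilinearMap F (fun _ : Fin K => A) A :=
  ∑ τ : Perm (Fin K), α (τ.viaEmbedding Fin.castSuccEmb) • (prodMultilinear F A K).domDomCongr τ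

theorem hkMultilinear_apply (b : Fin K → A) :
    hkMultilinear α b =
      ∑ τ : Perm (Fin K), α (τ.viaEmbedding Fin.castSuccEmb) • prodMultilinear F A K (b ∘ τ) := by
  simp [hkMultilinear]
  rfl

theorem hkPoly_succ (hk : 1 ≤ K + 1) (b : Fin K → A) :
    hkPoly (K + 1) hk α b = hkMultilinear α b := by
  let term (σ : Perm (Fin (K + 1))) : A :=
    prodList (List.ofFn fun i : Fin K => if h : (σ i.castSucc : ℕ) < K then b ⟨_, h⟩ else 0)
  calc hkPoly (K + 1) hk α b
      = ∑ σ ∈ univ.filter (fun σ : Perm (Fin (K + 1)) => σ (Fin.last K) = Fin.last K),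
          α σ • term σ := rfl
    _ = ∑ τ : Perm (Fin K),
          α (τ.viaEmbedding Fin.castSuccEmb) • term (τ.viaEmbedding Fin.castSuccEmb) :=
        Perm.sum_filter_apply_last_eq _
    _ = hkMultilinear α b := by
        rw [hkMultilinear_apply]
        refine sum_congr rfl fun τ _ => ?_
        simp [term, prodMultilinear_apply, comp_def]

theorem hkMultilinear_commutator (b : Fin K → A) (c : A) :
    hkMultilinear α b * c - c * hkMultilinear α b =
      ∑ i, hkMultilinear α (update b i (b i * c - c * b i)) := by
  simp only [hkMultilinear_apply, sum_mul, mul_sum, ← sum_sub_distrib, smul_mul_assoc,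
    mul_smul_comm, ← smul_sub]
  rw [sum_comm]
  refine sum_congr rfl fun τ _ => ?_
  rw [← smul_sum, prodMultilinear_commutator]
  refine congrArg _ (Fintype.sum_equiv τ _ _ fun i => ?_)
  simp [update_comp_equiv]

theorem hkMultilinear_mem_grade (Agr : ℕ → Submodule F A) [SetLike.GradedMul Agr]
    {b : Fin K → A} {nb : Fin K → ℕ} (hb : ∀ i, b i ∈ Agr (nb i)) :
    hkMultilinear α b ∈ Agr (∑ i, nb i) := by
  rw [hkMultilinear_apply]
  refine sum_mem fun τ _ => smul_mem _ _ ?_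
  rw [← Equiv.sum_comp τ]
  exact prodMultilinear_mem_grade Agr _ _ fun i => hb (τ i)

theorem hkMultilinear_zero (α : Perm (Fin 1) → F) (b : Fin 0 → A) : hkMultilinear α b = 0 := by
  simp [hkMultilinear_apply, prodMultilinear_zero]

theorem sum_filter_apply_last_eq_hkMultilinear_mul (hK : K ≠ 0) (b : Fin K → A) (a : A) :
    ∑ σ ∈ univ.filter (fun σ : Perm (Fin (K + 1)) => σ (Fin.last K) = Fin.last K),
        α σ • prodList (List.ofFn fun i => (Fin.snoc b a : Fin (K + 1) → A) (σ i)) =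
      hkMultilinear α b * a := by
  obtain ⟨K, rfl⟩ := Nat.exists_eq_succ_of_ne_zero hK
  rw [Perm.sum_filter_apply_last_eq, hkMultilinear_apply, sum_mul]
  refine sum_congr rfl fun τ _ => ?_
  have hsnoc : (fun i => (Fin.snoc b a : Fin (K + 2) → A) (τ.viaEmbedding Fin.castSuccEmb i)) =
      Fin.snoc (b ∘ τ) a := by
    ext j
    cases j using Fin.lastCases <;> simp
  rw [smul_mul_assoc, hsnoc, ← prodMultilinear_apply (R := F), prodMultilinear_snoc]

end HkPoly

theorem DirectSum.IsInternal.mem_span_of_mem_span_iUnion {R M ι : Type*} [Ring R]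
    [AddCommGroup M] [Module R M] [DecidableEq ι] {Agr : ι → Submodule R M}
    (hinternal : DirectSum.IsInternal Agr) {S : ι → Set M} (hS : ∀ i, S i ⊆ Agr i) {n : ι}
    {w : M} (hw : w ∈ span R (⋃ i, S i)) (hwn : w ∈ Agr n) : w ∈ span R (S n) := by
  have hle : span R (⋃ i, S i) ≤ span R (S n) ⊔ ⨆ (i) (_ : i ≠ n), Agr i := by
    refine span_le.mpr (Set.iUnion_subset fun i z hz => ?_)
    rcases eq_or_ne i n with rfl | hi
    · exact mem_sup_left (subset_span hz)
    · exact mem_sup_right (mem_iSup_of_mem i (mem_iSup_of_mem hi (hS i hz)))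
  obtain ⟨p, hp, q, hq, rfl⟩ := mem_sup.mp (hle hw)
  have hpn : p ∈ Agr n := span_le.mpr (hS n) hp
  have hqn : q ∈ Agr n := by simpa using sub_mem hwn hpn
  rw [disjoint_def.mp (hinternal.submodule_iSupIndep n) q hqn hq, add_zero]
  exact hp

theorem MultilinearMap.map_mem_span_image_pi {R M N ι : Type*} [CommSemiring R]
    [AddCommMonoid M] [AddCommMonoid N] [Module R M] [Module R N] [Fintype ι] [DecidableEq ι]
    (f : MultilinearMap R (fun _ : ι => M) N) {s : Set M} {b : ι → M}
    (hb : ∀ i, b i ∈ span R s) : f b ∈ span R (f '' Set.univ.pi fun _ => s) := by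
  suffices h : ∀ t : Finset ι, ∀ b : ι → M, (∀ i, b i ∈ span R s) → (∀ i ∉ t, b i ∈ s) →
      f b ∈ span R (f '' Set.univ.pi fun _ => s) from h univ b hb (by simp)
  intro t
  induction t using Finset.induction_on with
  | empty => exact fun b _ hs => subset_span ⟨b, fun i _ => hs i (notMem_empty i), rfl⟩
  | insert i t _ ih =>
    intro b hb hs
    suffices b i ∈ (span R (f '' Set.univ.pi fun _ => s)).comap (f.toLinearMap b i) by
      simpa using this
    refine span_le.mpr (fun y hy => ih _ (fun j => ?_) (fun j hj => ?_)) (hb i)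
    · rcases eq_or_ne j i with rfl | hji
      · simpa using subset_span hy
      · simpa [hji] using hb j
    · rcases eq_or_ne j i with rfl | hji
      · simpa using hy
      · simpa [hji] using hs j (by simp [hji, hj])

theorem LinearMap.apply_mem_span_image2 {R M N P : Type*} [CommSemiring R] [AddCommMonoid M]
    [AddCommMonoid N] [AddCommMonoid P] [Module R M] [Module R N] [Module R P]
    (f : M →ₗ[R] N →ₗ[R] P) {s : Set M} {t : Set N} {u : M} {v : N} (hu : u ∈ span R s)
    (hv : v ∈ span R t) : f u v ∈ span R (Set.image2 (fun m n => f m n) s t) :=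
  map₂_span_span R f s t ▸ apply_mem_map₂ f hu hv

theorem Submodule.apply_mem_of_mem_span {R M N : Type*} [Semiring R] [AddCommMonoid M]
    [AddCommMonoid N] [Module R M] [Module R N] (f : M →ₗ[R] N) {s : Set M} {p : Submodule R N}
    (h : ∀ z ∈ s, f z ∈ p) {w : M} (hw : w ∈ span R s) : f w ∈ p :=
  span_le (p := p.comap f) |>.mpr h hw

section Words

variable {A : Type*} {m : ℕ} (x : Fin m → A)

theorem monApply_cons [Mul A] (i : Fin m) (l : List (Fin m)) (y : A) :
    monApply x (i :: l) y = x i * monApply x l y := rfl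

theorem monApply_append [Mul A] (l₁ l₂ : List (Fin m)) (y : A) :
    monApply x (l₁ ++ l₂) y = monApply x l₁ (monApply x l₂ y) :=
  List.foldr_append

theorem monApply_mul [Semigroup A] (l : List (Fin m)) (y z : A) :
    monApply x l y * z = monApply x l (y * z) := by
  induction l with
  | nil => rfl
  | cons i l ih => rw [monApply_cons, mul_assoc, ih, monApply_cons]

theorem prodList_map_append_singleton [Semigroup A] [Zero A] (l : List (Fin m)) (y : A) :
    prodList (l.map x ++ [y]) = monApply x l y := by
  induction l with
  | nil => rfl
  | cons i l ih =>
    rw [List.map_cons, List.cons_append, prodList_cons _ (by simp), ih, monApply_cons]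

theorem monApply_mem_grade [Mul A] {S : Type*} [SetLike S A] {Agr : ℕ → S}
    [SetLike.GradedMul Agr] (hx : ∀ i, x i ∈ Agr 1) (l : List (Fin m)) {y : A} {n : ℕ}
    (hy : y ∈ Agr n) :
    monApply x l y ∈ Agr (l.length + n) := by
  induction l with
  | nil => rw [List.length_nil, zero_add]; exact hy
  | cons i l ih =>
    rw [monApply_cons, List.length_cons, add_right_comm, add_comm _ 1]
    exact SetLike.mul_mem_graded (hx i) ih

def wordsOfLength [Mul A] (n : ℕ) : Set A :=
  {z | ∃ (l : List (Fin m)) (j : Fin m), l.length + 1 = n ∧ z = monApply x l (x j)}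

end Words

section Generation

variable {F A : Type*} [Field F] [NonUnitalRing A] [Module F A] {m : ℕ} {x : Fin m → A}

theorem InAssocGen.mul_mem [IsScalarTower F A A] {u : A} (hu : InAssocGen (F := F) x u)
    {p : Submodule F A} (hp : ∀ j, ∀ z ∈ p, x j * z ∈ p) {z : A} (hz : z ∈ p) : u * z ∈ p := by
  induction hu generalizing z with
  | gen j => exact hp j z hz
  | add _ _ ihu ihv => rw [add_mul]; exact add_mem (ihu hz) (ihv hz)
  | smul c _ ih => rw [smul_mul_assoc]; exact smul_mem _ c (ih hz)
  | mul _ _ ihu ihv => rw [mul_assoc]; exact ihu (ihv hz)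

theorem InAssocGen.mem_mul [SMulCommClass F A A] {u : A} (hu : InAssocGen (F := F) x u)
    {p : Submodule F A} (hp : ∀ j, ∀ z ∈ p, z * x j ∈ p) {z : A} (hz : z ∈ p) : z * u ∈ p := by
  induction hu generalizing z with
  | gen j => exact hp j z hz
  | add _ _ ihu ihv => rw [mul_add]; exact add_mem (ihu hz) (ihv hz)
  | smul c _ ih => rw [mul_smul_comm]; exact smul_mem _ c (ih hz)
  | mul _ _ ihu ihv => rw [← mul_assoc]; exact ihv (ihu hz)

variable [IsScalarTower F A A] [SMulCommClass F A A]

theorem InAssocGen.mem_span_wordsOfLength {u : A} (hu : InAssocGen (F := F) x u) :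
    u ∈ span F (⋃ n, wordsOfLength x n) := by
  induction hu with
  | gen j => exact subset_span (Set.mem_iUnion.2 ⟨1, [], j, rfl, rfl⟩)
  | add _ _ ihu ihv => exact add_mem ihu ihv
  | smul c _ ih => exact smul_mem _ c ih
  | mul _ _ ihu ihv =>
    refine span_le.mpr ?_ ((LinearMap.mul F A).apply_mem_span_image2 ihu ihv)
    rintro _ ⟨_, hu, _, hv, rfl⟩
    obtain ⟨_, l, j, rfl, rfl⟩ := Set.mem_iUnion.1 hu
    obtain ⟨_, l', j', rfl, rfl⟩ := Set.mem_iUnion.1 hv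
    refine subset_span (Set.mem_iUnion.2 ⟨_, l ++ j :: l', j', rfl, ?_⟩)
    simp [monApply_mul, monApply_append, monApply_cons]

theorem mem_span_wordsOfLength_of_mem_grade (hgen : ∀ u : A, InAssocGen (F := F) x u)
    {Agr : ℕ → Submodule F A} [SetLike.GradedMul Agr] (hinternal : DirectSum.IsInternal Agr)
    (hx : ∀ i, x i ∈ Agr 1) {y : A} {n : ℕ} (hy : y ∈ Agr n) :
    y ∈ span F (wordsOfLength x n) := by
  refine hinternal.mem_span_of_mem_span_iUnion (fun n z hz => ?_)
    (hgen y).mem_span_wordsOfLength hy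
  obtain ⟨l, j, rfl, rfl⟩ := hz
  exact monApply_mem_grade x hx l (hx j)

end Generation

section Lie

variable {F A : Type*} [Field F] [NonUnitalRing A] [Module F A] {m : ℕ} (x : Fin m → A)

def homogeneousLie (Agr : ℕ → Submodule F A) (n : ℕ) : Set A :=
  {v | 1 ≤ n ∧ v ∈ Agr n ∧ InLieGen (F := F) x v}

variable {x} [IsScalarTower F A A] [SMulCommClass F A A]

theorem InLieGen.mem_span_homogeneousLie {Agr : ℕ → Submodule F A} [SetLike.GradedMul Agr]
    (hx : ∀ i, x i ∈ Agr 1) {u : A} (hu : InLieGen (F := F) x u) :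
    u ∈ span F (⋃ n, homogeneousLie x Agr n) := by
  induction hu with
  | gen i => exact subset_span (Set.mem_iUnion.2 ⟨1, le_rfl, hx i, .gen i⟩)
  | add _ _ ihu ihv => exact add_mem ihu ihv
  | smul c _ ih => exact smul_mem _ c ih
  | br _ _ ihu ihv =>
    have h := (LinearMap.mul F A - (LinearMap.mul F A).flip).apply_mem_span_image2 ihu ihv
    simp only [LinearMap.sub_apply, LinearMap.mul_apply', LinearMap.flip_apply] at h
    refine span_le.mpr ?_ h
    rintro _ ⟨v, hv, w, hw, rfl⟩
    obtain ⟨n, hn, hvn, hvL⟩ := Set.mem_iUnion.1 hv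
    obtain ⟨n', hn', hwn, hwL⟩ := Set.mem_iUnion.1 hw
    refine subset_span (Set.mem_iUnion.2 ⟨n + n', by omega, sub_mem (SetLike.mul_mem_graded hvn hwn)
      (add_comm n' n ▸ SetLike.mul_mem_graded hwn hvn), .br hvL hwL⟩)

end Lie

section ShortWords

variable (F : Type*) {A : Type*} [Field F] [NonUnitalRing A] [Module F A]
  {m : ℕ} (x : Fin m → A) (a : A)

def shortWordSpan (N : ℕ) : Submodule F A :=
  span F {z | ∃ (l : List (Fin m)) (u : A), l.length < N ∧ z = monApply x l a * u}

variable {F x a}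

theorem shortWordSpan_mono {N N' : ℕ} (h : N ≤ N') :
    shortWordSpan F x a N ≤ shortWordSpan F x a N' :=
  span_mono fun _ ⟨l, u, hl, hz⟩ => ⟨l, u, hl.trans_le h, hz⟩

theorem mul_mem_shortWordSpan [IsScalarTower F A A] {N : ℕ} {w : A}
    (hw : w ∈ shortWordSpan F x a N) (u : A) : w * u ∈ shortWordSpan F x a N := by
  refine apply_mem_of_mem_span (LinearMap.mulRight F u) (fun z hz => ?_) hw
  obtain ⟨l, v, hl, rfl⟩ := hz
  exact subset_span ⟨l, v * u, hl, by simp [mul_assoc]⟩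

theorem gen_mul_mem_shortWordSpan [SMulCommClass F A A] {N : ℕ} (j : Fin m) {w : A}
    (hw : w ∈ shortWordSpan F x a N) : x j * w ∈ shortWordSpan F x a (N + 1) := by
  refine apply_mem_of_mem_span (LinearMap.mulLeft F (x j)) (fun z hz => ?_) hw
  obtain ⟨l, u, hl, rfl⟩ := hz
  exact subset_span ⟨j :: l, u, by simpa using hl, by simp [mul_assoc, monApply_cons]⟩

theorem monApply_mem_shortWordSpan [SMulCommClass F A A] {N : ℕ} (l : List (Fin m)) {w : A}
    (hw : w ∈ shortWordSpan F x a N) : monApply x l w ∈ shortWordSpan F x a (N + l.length) := by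
  induction l with
  | nil => exact hw
  | cons j l ih => exact gen_mul_mem_shortWordSpan j ih

variable [IsScalarTower F A A] [SMulCommClass F A A]

theorem mul_mem_shortWordSpan_of_mem_grade (hgen : ∀ u : A, InAssocGen (F := F) x u)
    {Agr : ℕ → Submodule F A} [SetLike.GradedMul Agr] (hinternal : DirectSum.IsInternal Agr)
    (hx : ∀ i, x i ∈ Agr 1) {N n : ℕ} {y w : A} (hy : y ∈ Agr n)
    (hw : w ∈ shortWordSpan F x a N) : y * w ∈ shortWordSpan F x a (N + n) := by
  refine apply_mem_of_mem_span (LinearMap.mulRight F w) (fun z hz => ?_)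
    (mem_span_wordsOfLength_of_mem_grade hgen hinternal hx hy)
  obtain ⟨l, j, rfl, rfl⟩ := hz
  simpa [monApply_mul, ← add_assoc, add_right_comm N] using
    monApply_mem_shortWordSpan l (gen_mul_mem_shortWordSpan j hw)

/-- The factors after `a` have total degree at least one, so fewer than `∑ i, ν i` letters
precede it. -/
theorem prodMultilinear_mem_shortWordSpan (hgen : ∀ u : A, InAssocGen (F := F) x u)
    {Agr : ℕ → Submodule F A} [SetLike.GradedMul Agr] (hinternal : DirectSum.IsInternal Agr)
    (hx : ∀ i, x i ∈ Agr 1) :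
    ∀ {r : ℕ} (g : Fin (r + 1) → A) (ν : Fin (r + 1) → ℕ) {p : Fin (r + 1)}, p ≠ Fin.last r →
      g p = a → (∀ i ≠ p, g i ∈ Agr (ν i)) → 1 ≤ ν (Fin.last r) →
      prodMultilinear F A (r + 1) g ∈ shortWordSpan F x a (∑ i, ν i)
  | 0, _, _, p, hp, _, _, _ => absurd (Fin.ext (Nat.lt_one_iff.mp p.isLt)) hp
  | r + 1, g, ν, p, hp, hgp, hg, hν => by
    rw [prodMultilinear_succ_succ, Fin.sum_univ_succ]
    cases p using Fin.cases with
    | zero =>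
      refine shortWordSpan_mono ?_ (subset_span ⟨[], _, Nat.zero_lt_one, by rw [hgp]; rfl⟩)
      have : ν (Fin.last (r + 1)) ≤ ∑ i : Fin (r + 1), ν i.succ :=
        single_le_sum (f := fun i : Fin (r + 1) => ν i.succ) (fun _ _ => Nat.zero_le _)
          (mem_univ (Fin.last r))
      omega
    | succ q =>
      have hq : q ≠ Fin.last r := fun h => hp (by rw [h, Fin.succ_last])
      have htail := prodMultilinear_mem_shortWordSpan hgen hinternal hx (Fin.tail g)
        (Fin.tail ν) hq hgp (fun i hi => hg i.succ (Fin.succ_injective _ |>.ne hi)) hν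
      rw [add_comm]
      exact mul_mem_shortWordSpan_of_mem_grade hgen hinternal hx
        (hg 0 (Fin.succ_ne_zero q).symm) htail

end ShortWords

section WeakIdentity

variable {F A : Type*} [Field F] [NonUnitalRing A] [Module F A]
  [IsScalarTower F A A] [SMulCommClass F A A] {m : ℕ} {x : Fin m → A} {a : A}
  {Agr : ℕ → Submodule F A} [SetLike.GradedMul Agr] {K : ℕ} {α : Perm (Fin (K + 1)) → F}

theorem hkMultilinear_mul_mem (hgen : ∀ u : A, InAssocGen (F := F) x u)
    (hinternal : DirectSum.IsInternal Agr) (hx : ∀ i, x i ∈ Agr 1)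
    (hweak : ∀ c : Fin (K + 1) → A, (∀ i, InLieGen (F := F) x (c i)) →
      ∑ σ : Perm (Fin (K + 1)), α σ • prodList (List.ofFn fun i => c (σ i)) = 0)
    (ha : InLieGen (F := F) x a) {b : Fin K → A} {nb : Fin K → ℕ}
    (hb : ∀ i, b i ∈ homogeneousLie x Agr (nb i)) :
    hkMultilinear α b * a ∈ shortWordSpan F x a (∑ i, nb i) := by
  rcases eq_or_ne K 0 with rfl | hK
  · rw [hkMultilinear_zero, zero_mul]
    exact zero_mem _
  set c : Fin (K + 1) → A := Fin.snoc b a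
  set ν : Fin (K + 1) → ℕ := Fin.snoc nb 0
  have hc (j : Fin (K + 1)) (hj : j ≠ Fin.last K) : c j ∈ homogeneousLie x Agr (ν j) := by
    obtain ⟨j, rfl⟩ := Fin.exists_castSucc_eq.2 hj
    simpa [c, ν] using hb j
  have hcLie (j : Fin (K + 1)) : InLieGen (F := F) x (c j) := by
    rcases eq_or_ne j (Fin.last K) with rfl | hj
    · simpa [c] using ha
    · exact (hc j hj).2.2
  have hid := hweak c hcLie
  rw [← sum_filter_add_sum_filter_not _ (fun σ : Perm (Fin (K + 1)) => σ (Fin.last K) = Fin.last K),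
    sum_filter_apply_last_eq_hkMultilinear_mul α hK, add_eq_zero_iff_eq_neg] at hid
  rw [hid]
  refine neg_mem (sum_mem fun σ hσ => smul_mem _ _ ?_)
  replace hσ : σ (Fin.last K) ≠ Fin.last K := (mem_filter.mp hσ).2
  have hν : ∑ i, ν (σ i) = ∑ i, nb i := by
    rw [Equiv.sum_comp σ ν, Fin.sum_univ_castSucc]
    simp [ν]
  rw [← hν, ← prodMultilinear_apply (R := F)]
  refine prodMultilinear_mem_shortWordSpan hgen hinternal hx (c ∘ σ) (ν ∘ σ)
    (p := σ.symm (Fin.last K)) (fun h => hσ ?_) (by simp [c]) (fun i hi => (hc _ ?_).2.1)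
    (hc _ hσ).1
  · simpa [h] using σ.apply_symm_apply (Fin.last K)
  · rwa [Ne, ← Equiv.eq_symm_apply]

theorem hkMultilinear_mul_monApply_mem (hgen : ∀ u : A, InAssocGen (F := F) x u)
    (hinternal : DirectSum.IsInternal Agr) (hx : ∀ i, x i ∈ Agr 1)
    (hweak : ∀ c : Fin (K + 1) → A, (∀ i, InLieGen (F := F) x (c i)) →
      ∑ σ : Perm (Fin (K + 1)), α σ • prodList (List.ofFn fun i => c (σ i)) = 0)
    (ha : InLieGen (F := F) x a) (q : List (Fin m)) {b : Fin K → A} {nb : Fin K → ℕ}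
    (hb : ∀ i, b i ∈ homogeneousLie x Agr (nb i)) :
    hkMultilinear α b * monApply x q a ∈ shortWordSpan F x a (∑ i, nb i + q.length) := by
  induction q generalizing b nb with
  | nil => exact hkMultilinear_mul_mem hgen hinternal hx hweak ha hb
  | cons j q ih =>
    have hcomm : hkMultilinear α b * monApply x (j :: q) a =
        x j * (hkMultilinear α b * monApply x q a) +
          (hkMultilinear α b * x j - x j * hkMultilinear α b) * monApply x q a := by
      rw [monApply_cons]
      noncomm_ring
    rw [hcomm, hkMultilinear_commutator, sum_mul]
    refine add_mem (gen_mul_mem_shortWordSpan j (ih hb)) (sum_mem fun i _ => ?_)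
    have hb' (k : Fin K) : update b i (b i * x j - x j * b i) k ∈
        homogeneousLie x Agr ((nb + Pi.single i 1 : Fin K → ℕ) k) := by
      rcases eq_or_ne k i with rfl | hk
      · obtain ⟨hpos, hdeg, hLie⟩ := hb k
        rw [update_self]
        refine ⟨by simp, ?_, .br hLie (.gen j)⟩
        simpa using sub_mem (SetLike.mul_mem_graded hdeg (hx j))
          (add_comm 1 (nb k) ▸ SetLike.mul_mem_graded (hx j) hdeg)
      · simpa [hk] using hb k
    simpa [sum_add_distrib, add_right_comm, add_assoc] using ih hb'

end WeakIdentity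

section Shift

variable {F A : Type*} [Field F] [NonUnitalRing A] [Module F A] {m : ℕ} (x : Fin m → A) (a : A)
  (Agr : ℕ → Submodule F A)

def shiftSet (D : ℕ) : Set A :=
  {z | z ∈ Agr D ∧ ∀ q : List (Fin m), z * monApply x q a ∈ shortWordSpan F x a (D + q.length)}

variable {x a Agr} [SetLike.GradedMul Agr]

theorem gen_mul_mem_shiftSet [SMulCommClass F A A] (hx : ∀ i, x i ∈ Agr 1) (j : Fin m) {D : ℕ}
    {z : A} (hz : z ∈ shiftSet x a Agr D) : x j * z ∈ shiftSet x a Agr (D + 1) := by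
  refine ⟨add_comm 1 D ▸ SetLike.mul_mem_graded (hx j) hz.1, fun q => ?_⟩
  rw [mul_assoc, add_right_comm]
  exact gen_mul_mem_shortWordSpan j (hz.2 q)

theorem mul_gen_mem_shiftSet (hx : ∀ i, x i ∈ Agr 1) (j : Fin m) {D : ℕ} {z : A}
    (hz : z ∈ shiftSet x a Agr D) : z * x j ∈ shiftSet x a Agr (D + 1) := by
  refine ⟨SetLike.mul_mem_graded hz.1 (hx j), fun q => ?_⟩
  rw [mul_assoc, ← monApply_cons, add_assoc, add_comm 1]
  exact hz.2 (j :: q)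

theorem gen_mul_mem_span_shiftSet [SMulCommClass F A A] (hx : ∀ i, x i ∈ Agr 1) (j : Fin m) {z : A}
    (hz : z ∈ span F (⋃ D, shiftSet x a Agr D)) : x j * z ∈ span F (⋃ D, shiftSet x a Agr D) := by
  refine apply_mem_of_mem_span (LinearMap.mulLeft F (x j)) (fun w hw => ?_) hz
  obtain ⟨D, hw⟩ := Set.mem_iUnion.1 hw
  exact subset_span (Set.mem_iUnion.2 ⟨D + 1, gen_mul_mem_shiftSet hx j hw⟩)

theorem mul_gen_mem_span_shiftSet [IsScalarTower F A A] (hx : ∀ i, x i ∈ Agr 1) (j : Fin m) {z : A}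
    (hz : z ∈ span F (⋃ D, shiftSet x a Agr D)) : z * x j ∈ span F (⋃ D, shiftSet x a Agr D) := by
  refine apply_mem_of_mem_span (LinearMap.mulRight F (x j)) (fun w hw => ?_) hz
  obtain ⟨D, hw⟩ := Set.mem_iUnion.1 hw
  exact subset_span (Set.mem_iUnion.2 ⟨D + 1, mul_gen_mem_shiftSet hx j hw⟩)

theorem hkMultilinear_mem_span_shiftSet [IsScalarTower F A A] [SMulCommClass F A A] {K : ℕ}
    {α : Perm (Fin (K + 1)) → F}
    (hgen : ∀ u : A, InAssocGen (F := F) x u) (hinternal : DirectSum.IsInternal Agr)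
    (hx : ∀ i, x i ∈ Agr 1)
    (hweak : ∀ c : Fin (K + 1) → A, (∀ i, InLieGen (F := F) x (c i)) →
      ∑ σ : Perm (Fin (K + 1)), α σ • prodList (List.ofFn fun i => c (σ i)) = 0)
    (ha : InLieGen (F := F) x a) {b : Fin K → A} (hb : ∀ i, InLieGen (F := F) x (b i)) :
    hkMultilinear α b ∈ span F (⋃ D, shiftSet x a Agr D) := by
  refine span_le.mpr ?_
    ((hkMultilinear α).map_mem_span_image_pi fun i => (hb i).mem_span_homogeneousLie hx)
  rintro _ ⟨c, hc, rfl⟩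
  choose nc hnc using fun i => Set.mem_iUnion.1 (hc i trivial)
  exact subset_span (Set.mem_iUnion.2 ⟨_, hkMultilinear_mem_grade α Agr fun i => (hnc i).2.1,
    fun q => hkMultilinear_mul_monApply_mem hgen hinternal hx hweak ha q hnc⟩)

theorem span_hkIdeal_le_span_shiftSet [IsScalarTower F A A] [SMulCommClass F A A] {K : ℕ}
    {α : Perm (Fin (K + 1)) → F}
    (hgen : ∀ u : A, InAssocGen (F := F) x u) (hinternal : DirectSum.IsInternal Agr)
    (hx : ∀ i, x i ∈ Agr 1)
    (hweak : ∀ c : Fin (K + 1) → A, (∀ i, InLieGen (F := F) x (c i)) →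
      ∑ σ : Perm (Fin (K + 1)), α σ • prodList (List.ofFn fun i => c (σ i)) = 0)
    (ha : InLieGen (F := F) x a) :
    span F {z : A | ∃ b : Fin K → A, (∀ i, InLieGen (F := F) x (b i)) ∧
        (z = hkMultilinear α b ∨ (∃ u : A, z = u * hkMultilinear α b) ∨
          (∃ v : A, z = hkMultilinear α b * v) ∨ (∃ u v : A, z = u * hkMultilinear α b * v))} ≤
      span F (⋃ D, shiftSet x a Agr D) := by
  set P := span F (⋃ D, shiftSet x a Agr D)
  have left (u : A) {z : A} (hz : z ∈ P) : u * z ∈ P :=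
    (hgen u).mul_mem (fun j _ => gen_mul_mem_span_shiftSet hx j) hz
  have right (v : A) {z : A} (hz : z ∈ P) : z * v ∈ P :=
    (hgen v).mem_mul (fun j _ => mul_gen_mem_span_shiftSet hx j) hz
  refine span_le.mpr ?_
  rintro _ ⟨b, hb, rfl | ⟨u, rfl⟩ | ⟨v, rfl⟩ | ⟨u, v, rfl⟩⟩ <;>
    have hh := hkMultilinear_mem_span_shiftSet hgen hinternal hx hweak ha hb
  exacts [hh, left u hh, right v hh, right v (left u hh)]

theorem monApply_mem_shortWordSpan_of_le [IsScalarTower F A A]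
    (hinternal : DirectSum.IsInternal Agr)     (hx : ∀ i, x i ∈ Agr 1) {d : ℕ} (hd : 1 ≤ d)
    (hwords : ∀ z ∈ wordsOfLength x d, z ∈ span F (⋃ D, shiftSet x a Agr D))
    (l : List (Fin m)) (hl : d ≤ l.length) : monApply x l a ∈ shortWordSpan F x a d := by
  induction hn : l.length using Nat.strong_induction_on generalizing l with
  | _ n ih =>
  have hle : shortWordSpan F x a n ≤ shortWordSpan F x a d := by
    refine span_le.mpr ?_
    rintro _ ⟨l', u, hl', rfl⟩
    by_cases hd' : l'.length < d
    · exact subset_span ⟨l', u, hd', rfl⟩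
    · exact mul_mem_shortWordSpan (ih _ (hn ▸ hl') l' (not_lt.mp hd') rfl) u
  obtain ⟨j, rest, hrest⟩ := List.exists_cons_of_ne_nil (l := l.drop (d - 1))
    (by rw [Ne, List.drop_eq_nil_iff]; omega)
  have hl₀ : (l.take (d - 1)).length + 1 = d := by simp; omega
  have hsplit : monApply x l a = monApply x (l.take (d - 1)) (x j) * monApply x rest a := by
    rw [monApply_mul, ← monApply_cons, ← monApply_append, ← hrest, List.take_append_drop]
  have hlen : d + rest.length = n := by
    rw [← hn, ← List.take_append_drop (d - 1) l, hrest]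
    simp only [List.length_append, List.length_cons]
    omega
  have hdeg := monApply_mem_grade x hx (l.take (d - 1)) (hx j)
  rw [hl₀] at hdeg
  have hword : monApply x (l.take (d - 1)) (x j) ∈ span F (shiftSet x a Agr d) :=
    hinternal.mem_span_of_mem_span_iUnion (fun _ _ hz => hz.1) (hwords _ ⟨_, j, hl₀, rfl⟩) hdeg
  rw [hsplit]
  exact hle (apply_mem_of_mem_span (LinearMap.mulRight F (monApply x rest a))
    (fun z hz => hlen ▸ hz.2 rest) hword)

end Shift

theorem graded_algebra_Ad_mul_mem_span_general
    {F A : Type*} [Field F] [NonUnitalRing A] [Module F A]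
    [SMulCommClass F A A] [IsScalarTower F A A]
    (Agr : ℕ → Submodule F A)
    (hinternal : DirectSum.IsInternal Agr)
    (hmul : ∀ i j : ℕ, ∀ u ∈ Agr i, ∀ v ∈ Agr j, u * v ∈ Agr (i + j))
    {m : ℕ} (x : Fin m → A) (hdeg : ∀ i, x i ∈ Agr 1)
    (hgen : ∀ u : A, InAssocGen (F := F) x u)
    (k : ℕ) (hk : 1 ≤ k) (α : Equiv.Perm (Fin k) → F)
    (hweak : ∀ a : Fin k → A, (∀ i, InLieGen (F := F) x (a i)) →
      ∑ σ : Equiv.Perm (Fin k), α σ • prodList (List.ofFn fun i => a (σ i)) = 0)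
    (d : ℕ) (hd : 1 ≤ d)
    (hAdM : Submodule.span F { z : A | ∃ l : List A, l.length = d ∧ z = prodList l } ≤
      Submodule.span F { z : A | ∃ b : Fin (k - 1) → A, (∀ i, InLieGen (F := F) x (b i)) ∧
        (z = hkPoly k hk α b ∨ (∃ u : A, z = u * hkPoly k hk α b) ∨
          (∃ v : A, z = hkPoly k hk α b * v) ∨
          (∃ u v : A, z = u * hkPoly k hk α b * v)) })
    (a : A) (ha : InLieGen (F := F) x a) :
    ∀ w ∈ Submodule.span F { z : A | ∃ l : List A, l.length = d ∧ z = prodList l },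
      w * a ∈ Submodule.span F
        { z : A | ∃ l : List (Fin m), l.length ≤ d - 1 ∧
          (z = monApply x l a ∨ ∃ u : A, z = monApply x l a * u) } := by
  obtain ⟨K, rfl⟩ : ∃ K, k = K + 1 := ⟨k - 1, by omega⟩
  have : SetLike.GradedMul Agr := ⟨fun {i j} u v hu hv => hmul i j u hu v hv⟩
  simp only [hkPoly_succ] at hAdM
  have hwords (z : A) (hz : z ∈ wordsOfLength x d) : z ∈ span F (⋃ D, shiftSet x a Agr D) := by
    obtain ⟨l, j, hl, rfl⟩ := hz
    exact span_hkIdeal_le_span_shiftSet hgen hinternal hdeg hweak ha (hAdM (subset_span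
      ⟨l.map x ++ [x j], by simp [hl], (prodList_map_append_singleton x l (x j)).symm⟩))
  intro w _
  refine apply_mem_of_mem_span (LinearMap.mulRight F a) (fun z hz => ?_)
    (hgen w).mem_span_wordsOfLength
  obtain ⟨_, l, j, rfl, rfl⟩ := Set.mem_iUnion.1 hz
  have hza : monApply x l (x j) * a = monApply x (l ++ [j]) a := by
    rw [monApply_mul, monApply_append]; rfl
  simp only [LinearMap.mulRight_apply, hza]
  by_cases hl : (l ++ [j]).length ≤ d - 1
  · exact subset_span ⟨_, hl, Or.inl rfl⟩
  · refine span_le.mpr ?_ (monApply_mem_shortWordSpan_of_le hinternal hdeg hd hwords _ (by omega))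
    rintro _ ⟨l', u, hl', rfl⟩
    exact subset_span ⟨l', by omega, Or.inr ⟨u, rfl⟩⟩

/-- Lemma 24: in a graded associative algebra `A` generated by degree-one elements
`x_1, …, x_m`, whose Lie subalgebra `L` satisfies the weak identity
`Σ_σ α_σ a_{σ(1)} ⋯ a_{σ(k)} = 0`, if `A^d ⊆ M` (where `M` is the two-sided ideal generated
by the values of `h_k` on `L`), then for every `a ∈ L` we have
`A^d·a ⊆ span { x_{i₁} ⋯ x_{i_t}·a, x_{i₁} ⋯ x_{i_t}·a·u : t ≤ d-1, u ∈ A }`. -/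
theorem graded_algebra_Ad_mul_mem_span
    {F A : Type*} [Field F] [NonUnitalRing A] [Module F A]
    [SMulCommClass F A A] [IsScalarTower F A A]
    (Agr : ℕ → Submodule F A) (h0 : Agr 0 = ⊥)
    (hinternal : DirectSum.IsInternal Agr)
    (hmul : ∀ i j : ℕ, ∀ u ∈ Agr i, ∀ v ∈ Agr j, u * v ∈ Agr (i + j))
    {m : ℕ} (x : Fin m → A) (hdeg : ∀ i, x i ∈ Agr 1)
    (hgen : ∀ u : A, InAssocGen (F := F) x u)
    (k : ℕ) (hk : 1 ≤ k) (α : Equiv.Perm (Fin k) → F) (hα : α 1 = 1)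
    (hweak : ∀ a : Fin k → A, (∀ i, InLieGen (F := F) x (a i)) →
      ∑ σ : Equiv.Perm (Fin k), α σ • prodList (List.ofFn fun i => a (σ i)) = 0)
    (d : ℕ) (hd : 1 ≤ d)
    (hAdM : Submodule.span F { z : A | ∃ l : List A, l.length = d ∧ z = prodList l } ≤
      Submodule.span F { z : A | ∃ b : Fin (k - 1) → A, (∀ i, InLieGen (F := F) x (b i)) ∧
        (z = hkPoly k hk α b ∨ (∃ u : A, z = u * hkPoly k hk α b) ∨
          (∃ v : A, z = hkPoly k hk α b * v) ∨
          (∃ u v : A, z = u * hkPoly k hk α b * v)) })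
    (a : A) (ha : InLieGen (F := F) x a) :
    ∀ w ∈ Submodule.span F { z : A | ∃ l : List A, l.length = d ∧ z = prodList l },
      w * a ∈ Submodule.span F
        { z : A | ∃ l : List (Fin m), l.length ≤ d - 1 ∧
          (z = monApply x l a ∨ ∃ u : A, z = monApply x l a * u) } :=
  graded_algebra_Ad_mul_mem_span_general Agr hinternal hmul x hdeg hgen k hk α hweak d hd hAdM a ha
end

section
/- Let L be a Lie algebra over a field F of characteristic p > 0 and let I be a Lie ideal of L whose centralizer in L is zero, i.e., the only element x ∈ L with ⁅x, y⁆ = 0 for all y ∈ I is x = 0. Let a ∈ I satisfy ⁅⁅x, a⁆, a⁆ = 0 for all x ∈ I. Then ad(a)^p = 0 as an operator on L (in fact ⁅⁅x, a⁆, a⁆ = 0 for all x ∈ L when p = 2, and ad(a)^3 = 0 when p ≥ 3). -/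
/-!
Since `I` is an ideal containing `a`, `ad(a)^3 x = ad(a)^2 ⁅a, x⁆` vanishes for every `x ∈ L`.
In characteristic `2` the Leibniz rule for `ad(a)^2` loses its cross term `2 ⁅ad(a) x, ad(a) y⁆`,
so for `y ∈ I` it reads `⁅ad(a)^2 x, y⁆ = ad(a)^2 ⁅x, y⁆ - ⁅x, ad(a)^2 y⁆ = 0`; as the centralizer
of `I` is zero, `ad(a)^2 = 0`. A characteristic `p > 0` is prime, hence `p = 2` or `p ≥ 3`.
-/

open LieAlgebra

namespace LieAlgebra

variable {R L : Type*} [CommRing R] [LieRing L] [LieAlgebra R L]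

theorem ad_sq_apply (a x : L) : (ad R L a ^ 2) x = ⁅⁅x, a⁆, a⁆ := by
  rw [pow_two, Module.End.mul_apply, ad_apply, ad_apply, ← lie_skew x a, neg_lie, ← lie_skew]

theorem ad_sq_lie (a x y : L) :
    (ad R L a ^ 2) ⁅x, y⁆ =
      ⁅x, (ad R L a ^ 2) y⁆ + (2 : ℕ) • ⁅ad R L a x, ad R L a y⁆ + ⁅(ad R L a ^ 2) x, y⁆ := by
  rw [ad_pow_lie]
  simp only [Finset.Nat.sum_antidiagonal_succ, Finset.HasAntidiagonal.antidiagonal_zero,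
    Finset.sum_singleton, Nat.choose_zero_right, Nat.choose_succ_self_right, Nat.choose_self,
    pow_zero, pow_one, Module.End.one_apply, one_smul, zero_add, add_assoc]

variable {I : LieIdeal R L} {a : L}

theorem ad_pow_three_eq_zero_of_ad_sq_eq_zero_on_ideal (ha : a ∈ I)
    (hI : ∀ x ∈ I, (ad R L a ^ 2) x = 0) : ad R L a ^ 3 = 0 := by
  ext x
  rw [pow_succ, Module.End.mul_apply, LinearMap.zero_apply]
  exact hI _ (lie_mem_left R L I a x ha)

theorem ad_sq_eq_zero_of_ad_sq_eq_zero_on_ideal (h2 : (2 : R) = 0)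
    (hcent : ∀ x : L, (∀ y ∈ I, ⁅x, y⁆ = 0) → x = 0)
    (hI : ∀ x ∈ I, (ad R L a ^ 2) x = 0) : ad R L a ^ 2 = 0 := by
  ext x
  refine hcent _ fun y hy => ?_
  have h := ad_sq_lie (R := R) a x y
  rw [hI _ (lie_mem_right R L I x y hy), hI y hy, ← Nat.cast_smul_eq_nsmul R, Nat.cast_ofNat, h2,
    lie_zero, zero_smul, zero_add, zero_add] at h
  exact h.symm

end LieAlgebra

/-- Lemma 30: over a field of characteristic `p > 0`, if `I` is a Lie ideal of `L` with zero
centralizer and `a ∈ I` satisfies `⁅⁅x, a⁆, a⁆ = 0` for all `x ∈ I`, then `ad(a)^p = 0` on `L`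
(indeed `⁅⁅x, a⁆, a⁆ = 0` for all `x ∈ L` when `p = 2`, and `ad(a)^3 = 0` when `p ≥ 3`). -/
theorem ad_pow_p_eq_zero_of_sandwich_in_ideal
    {F : Type*} {L : Type*} [Field F] [LieRing L] [LieAlgebra F L]
    (p : ℕ) [CharP F p] (hp : 0 < p)
    (I : LieIdeal F L)
    (hcent : ∀ x : L, (∀ y ∈ I, ⁅x, y⁆ = 0) → x = 0)
    (a : L) (ha : a ∈ I) (haa : ∀ x ∈ I, ⁅⁅x, a⁆, a⁆ = 0) :
    (LieAlgebra.ad F L a) ^ p = 0 ∧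
      (p = 2 → ∀ x : L, ⁅⁅x, a⁆, a⁆ = 0) ∧
      (3 ≤ p → (LieAlgebra.ad F L a) ^ 3 = 0) := by
  have hsand : ∀ x ∈ I, (ad F L a ^ 2) x = 0 := fun x hx => (ad_sq_apply a x).trans (haa x hx)
  have hcube : ad F L a ^ 3 = 0 := ad_pow_three_eq_zero_of_ad_sq_eq_zero_on_ideal ha hsand
  have hsq : p = 2 → ad F L a ^ 2 = 0 := by
    rintro rfl
    exact ad_sq_eq_zero_of_ad_sq_eq_zero_on_ideal (by exact_mod_cast CharP.cast_eq_zero F 2)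
      hcent hsand
  refine ⟨?_, fun h2 x => ?_, fun _ => hcube⟩
  · rcases (CharP.char_prime_of_ne_zero F hp.ne').two_le.eq_or_lt with h | h
    · exact h ▸ hsq h.symm
    · exact pow_eq_zero_of_le h hcube
  · rw [← ad_sq_apply (R := F), hsq h2, LinearMap.zero_apply]
end
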